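/- arXiv:2312.16474 — 5 statements merged into one kernel-verified Lean document; each statement's English description precedes it below -/
import Mathlib

section
/- Let G be a finite simple graph. Then the kromatic symmetric function satisfies X̄_G = Σ_{D ∈ mAO(G)} Γ̄(D), where the sum is over all acyclic multi-orientations of G; the identity holds coefficientwise (for each monomial in the x variables, only finitely many D ∈ mAO(G) contribute a nonzero coefficient, and the coefficient of that monomial in X̄_G equals the sum of its coefficients in the Γ̄(D)). -/
/-!
STATEMENT 0: For a finite simple graph `G`, the kromatic symmetric function satisfies
`X̄_G = Σ_{D ∈ mAO(G)} Γ̄(D)` coefficientwise: for each monomial, only finitely many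
acyclic multi-orientations `D` contribute a nonzero coefficient, and the coefficient of
that monomial in `X̄_G` equals the sum of its coefficients in the `Γ̄(D)`.
-/

open scoped Classical
noncomputable section

/-- `S ≺ T`: every element of `S` is less than every element of `T`
(for nonempty finite sets this says `max S < min T`). -/
def FinsetAllLT (S T : Finset ℕ+) : Prop := ∀ a ∈ S, ∀ b ∈ T, a < b

/-- `m` is the monomial `x^κ` of the set-valued coloring `κ`:
the exponent of `x_i` is the number of vertices whose color set contains `i`. -/
def MonoMatch {W : Type*} (κ : W → Finset ℕ+) (m : ℕ+ →₀ ℕ) : Prop :=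
  ∀ i : ℕ+, m i = Nat.card {w : W // i ∈ κ w}

/-- A proper set-valued coloring: nonempty finite sets of positive integers,
disjoint on adjacent vertices. -/
def IsProperSV {V : Type*} (G : SimpleGraph V) (κ : V → Finset ℕ+) : Prop :=
  (∀ v, (κ v).Nonempty) ∧ ∀ ⦃u v⦄, G.Adj u v → Disjoint (κ u) (κ v)

/-- The kromatic symmetric function `X̄_G = Σ_κ x^κ`, defined coefficientwise:
the coefficient of a monomial `m` is the number of proper set-valued colorings
with monomial `m`. -/
def kromatic {V : Type*} (G : SimpleGraph V) : MvPowerSeries ℕ+ ℤ :=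
  fun m => (Nat.card {κ : V → Finset ℕ+ // IsProperSV G κ ∧ MonoMatch κ m} : ℤ)

/-- `(v,i)` is a vertex of the `α`-clan graph, i.e. `1 ≤ i ≤ α v`. -/
def ClanVert {V : Type*} (α : V → ℕ+) (p : V × ℕ+) : Prop := p.2 ≤ α p.1

/-- Adjacency in the `α`-clan graph `Cl_α(G)`: both endpoints are clan vertices, and
either the underlying vertices are adjacent in `G`, or they coincide with different indices. -/
def ClanAdj {V : Type*} (G : SimpleGraph V) (α : V → ℕ+) (p q : V × ℕ+) : Prop :=
  ClanVert α p ∧ ClanVert α q ∧ (G.Adj p.1 q.1 ∨ (p.1 = q.1 ∧ p.2 ≠ q.2))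

/-- An acyclic orientation of the clan graph `Cl_α(G)`: each clan edge gets exactly one
direction, and there is no directed cycle. -/
structure ClanOrientation {V : Type*} (G : SimpleGraph V) (α : V → ℕ+) where
  edge : V × ℕ+ → V × ℕ+ → Prop
  edge_adj : ∀ p q, edge p q → ClanAdj G α p q
  oriented : ∀ p q, ClanAdj G α p q → (edge p q ↔ ¬ edge q p)
  acyclic : ∀ p, ¬ Relation.TransGen edge p p

/-- `p` is a directed path from `a` to `b` for the edge relation `r`,
recorded as its (nonempty) list of vertices. -/
def IsDiPath {W : Type*} (r : W → W → Prop) (p : List W) (a b : W) : Prop :=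
  p.Chain' r ∧ p.head? = some a ∧ p.getLast? = some b

/-- The multi-orientation condition: for each vertex `v` and each `1 ≤ i ≤ α v - 1`
there are at least two distinct directed paths from `(v, i+1)` to `(v, i)`. -/
def IsMultiOrientation {V : Type*} {G : SimpleGraph V} {α : V → ℕ+}
    (D : ClanOrientation G α) : Prop :=
  ∀ v : V, ∀ i : ℕ+, i + 1 ≤ α v →
    ∃ p₁ p₂ : List (V × ℕ+), p₁ ≠ p₂ ∧
      IsDiPath D.edge p₁ (v, i + 1) (v, i) ∧ IsDiPath D.edge p₂ (v, i + 1) (v, i)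

/-- An acyclic multi-orientation of `G`: an acyclic orientation of some clan graph
`Cl_α(G)` satisfying the multi-orientation condition.  Two acyclic multi-orientations
are equal exactly when they have the same vertices (i.e. the same `α`) and the same
directed edges, which agrees with equality of terms of this structure. -/
structure MAO {V : Type*} (G : SimpleGraph V) where
  α : V → ℕ+
  ornt : ClanOrientation G α
  multi : IsMultiOrientation ornt

/-- The vertex set of an acyclic multi-orientation. -/
def MAO.Verts {V : Type*} {G : SimpleGraph V} (D : MAO G) : Type _ :=
  {p : V × ℕ+ // ClanVert D.α p}

/-- `Γ̄` of a directed acyclic graph, defined coefficientwise: the coefficient of a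
monomial `m` is the number of labelings of the vertices by nonempty finite sets of
positive integers with `κ(u) ≺ κ(v)` along each directed edge, having monomial `m`. -/
def gammabar {W : Type*} (r : W → W → Prop) : MvPowerSeries ℕ+ ℤ :=
  fun m => (Nat.card {κ : W → Finset ℕ+ //
      (∀ w, (κ w).Nonempty) ∧ (∀ u v, r u v → FinsetAllLT (κ u) (κ v)) ∧ MonoMatch κ m} : ℤ)

/-- `Γ̄(D)` for an acyclic multi-orientation `D`. -/
def MAO.gamma {V : Type*} {G : SimpleGraph V} (D : MAO G) : MvPowerSeries ℕ+ ℤ :=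
  gammabar (fun p q : D.Verts => D.ornt.edge p.1 q.1)

namespace Krom

variable {V : Type*}

/-- `x` lies strictly between `a` and `b`. -/
def Btwn (x a b : ℕ+) : Prop := (a < x ∧ x < b) ∨ (b < x ∧ x < a)

lemma btwn_symm {x a b : ℕ+} (h : Btwn x a b) : Btwn x b a := h.symm

lemma btwn_split {x a b c : ℕ+} (hxb : x ≠ b) (h : Btwn x a c) :
    Btwn x a b ∨ Btwn x b c := by
  rcases lt_or_gt_of_ne hxb with hx | hx
  · rcases h with ⟨h1, h2⟩ | ⟨h1, h2⟩
    · exact Or.inl (Or.inl ⟨h1, hx⟩)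
    · exact Or.inr (Or.inr ⟨h1, hx⟩)
  · rcases h with ⟨h1, h2⟩ | ⟨h1, h2⟩
    · exact Or.inr (Or.inl ⟨hx, h2⟩)
    · exact Or.inl (Or.inr ⟨hx, h2⟩)

lemma btwn_mono_left {x a b c : ℕ+} (hab : a ≤ b) (hbc : b ≤ c) (h : Btwn x a b) :
    Btwn x a c := by
  rcases h with ⟨h1, h2⟩ | ⟨h1, h2⟩
  · exact Or.inl ⟨h1, lt_of_lt_of_le h2 hbc⟩
  · exact absurd (h1.trans h2) (not_lt.mpr (hab))

lemma btwn_mono_right {x a b c : ℕ+} (hab : a ≤ b) (hbc : b ≤ c) (h : Btwn x b c) :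
    Btwn x a c := by
  rcases h with ⟨h1, h2⟩ | ⟨h1, h2⟩
  · exact Or.inl ⟨lt_of_le_of_lt hab h1, h2⟩
  · exact absurd (h1.trans h2) (not_lt.mpr (hbc))

variable (G : SimpleGraph V) (κ : V → Finset ℕ+)

/-- No color of a neighbor of `v` lies strictly between `a` and `b`. -/
def rel (v : V) (a b : ℕ+) : Prop := ∀ u, G.Adj v u → ∀ x ∈ κ u, ¬ Btwn x a b

def BMin (v : V) (d : ℕ+) : Prop := ∀ c ∈ κ v, c < d → ¬ rel G κ v c d

def idxS (v : V) (a : ℕ+) : Finset ℕ+ :=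
  (κ v).filter fun d => (rel G κ v a d ∨ a < d) ∧ BMin G κ v d

/-- The (1-based from the top) index of the block of `a` in `κ v`. -/
def idx (v : V) (a : ℕ+) : ℕ := (idxS G κ v a).card

variable {G κ}

lemma rel_refl (v : V) (a : ℕ+) : rel G κ v a a := by
  intro u _ x _ h
  rcases h with ⟨h1, h2⟩ | ⟨h1, h2⟩ <;> exact absurd (h1.trans h2) (lt_irrefl _)

lemma rel_symm {v : V} {a b : ℕ+} (h : rel G κ v a b) : rel G κ v b a :=
  fun u hu x hx hB => h u hu x hx (btwn_symm hB)

lemma mem_ne_of_adj (hκ : IsProperSV G κ) {v u : V} {a x : ℕ+} (h : G.Adj v u) (ha : a ∈ κ v) (hx : x ∈ κ u) :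
    x ≠ a := fun he => (Finset.disjoint_left.mp (hκ.2 h) ha) (he ▸ hx)

lemma rel_trans (hκ : IsProperSV G κ) {v : V} {a b c : ℕ+} (hb : b ∈ κ v)
    (h1 : rel G κ v a b) (h2 : rel G κ v b c) : rel G κ v a c := by
  intro u hu x hx hB
  rcases btwn_split (mem_ne_of_adj hκ hu hb hx) hB with h | h
  · exact h1 u hu x hx h
  · exact h2 u hu x hx h

lemma rel_shrink_left {v : V} {a b c : ℕ+} (hab : a ≤ b) (hbc : b ≤ c)
    (h : rel G κ v a c) : rel G κ v a b :=
  fun u hu x hx hB => h u hu x hx (btwn_mono_left hab hbc hB)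

lemma rel_shrink_right {v : V} {a b c : ℕ+} (hab : a ≤ b) (hbc : b ≤ c)
    (h : rel G κ v a c) : rel G κ v b c :=
  fun u hu x hx hB => h u hu x hx (btwn_mono_right hab hbc hB)

variable (G κ) in
/-- The minimum of the block of `a` in `κ v`. -/
def blkmin (v : V) (a : ℕ+) : ℕ+ :=
  if h : a ∈ κ v then
    ((κ v).filter (rel G κ v a)).min' ⟨a, by simp [h, rel_refl]⟩
  else 1

lemma blkmin_mem {v : V} {a : ℕ+} (h : a ∈ κ v) :
    blkmin G κ v a ∈ κ v ∧ rel G κ v a (blkmin G κ v a) := by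
  rw [blkmin, dif_pos h]
  have := Finset.min'_mem ((κ v).filter (rel G κ v a)) ⟨a, by simp [h, rel_refl]⟩
  simpa using this

lemma blkmin_le {v : V} {a : ℕ+} (h : a ∈ κ v) : blkmin G κ v a ≤ a := by
  rw [blkmin, dif_pos h]
  exact Finset.min'_le _ _ (by simp [h, rel_refl])

lemma blkmin_le_of_rel {v : V} {a d : ℕ+} (ha : a ∈ κ v) (hd : d ∈ κ v)
    (hrel : rel G κ v a d) : blkmin G κ v a ≤ d := by
  rw [blkmin, dif_pos ha]
  exact Finset.min'_le _ _ (by simp [hd, hrel])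

lemma blkmin_bmin (hκ : IsProperSV G κ) {v : V} {a : ℕ+} (h : a ∈ κ v) : BMin G κ v (blkmin G κ v a) := by
  intro c hc hlt hrel
  have h1 := blkmin_mem (G := G) (κ := κ) h
  have : rel G κ v a c := rel_trans hκ h1.1 h1.2 (rel_symm hrel)
  exact absurd hlt (not_lt.mpr (blkmin_le_of_rel h hc this))

lemma blkmin_mem_idxS (hκ : IsProperSV G κ) {v : V} {a : ℕ+} (h : a ∈ κ v) :
    blkmin G κ v a ∈ idxS G κ v a := by
  rw [idxS, Finset.mem_filter]
  exact ⟨(blkmin_mem h).1, Or.inl (blkmin_mem h).2, blkmin_bmin hκ h⟩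

lemma idx_pos (hκ : IsProperSV G κ) {v : V} {a : ℕ+} (h : a ∈ κ v) : 0 < idx G κ v a :=
  Finset.card_pos.mpr ⟨_, blkmin_mem_idxS hκ h⟩

lemma eq_blkmin_of_bmin (hκ : IsProperSV G κ) {v : V} {a d : ℕ+} (ha : a ∈ κ v) (hd : d ∈ κ v)
    (hrel : rel G κ v a d) (hB : BMin G κ v d) : d = blkmin G κ v a := by
  have h1 : blkmin G κ v a ≤ d := blkmin_le_of_rel ha hd hrel
  rcases eq_or_lt_of_le h1 with h | h
  · exact h.symm
  · exfalso
    have hm := blkmin_mem (G := G) (κ := κ) ha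
    exact hB _ hm.1 h (rel_trans hκ ha (rel_symm hm.2) hrel)

lemma idxS_subset {v : V} {a b : ℕ+} (ha : a ∈ κ v) (hb : b ∈ κ v) (hab : a ≤ b) :
    idxS G κ v b ⊆ idxS G κ v a := by
  intro d hd
  rw [idxS, Finset.mem_filter] at hd ⊢
  obtain ⟨hdm, hor, hB⟩ := hd
  refine ⟨hdm, ?_, hB⟩
  rcases hor with hrel | hlt
  · by_cases had : a < d
    · exact Or.inr had
    · push_neg at had
      exact Or.inl (rel_symm (rel_shrink_left had hab (rel_symm hrel)))
  · exact Or.inr (lt_of_le_of_lt hab hlt)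

lemma idxS_subset_of_rel (hκ : IsProperSV G κ) {v : V} {a b : ℕ+} (ha : a ∈ κ v) (hb : b ∈ κ v)
    (hrel : rel G κ v a b) : idxS G κ v a ⊆ idxS G κ v b := by
  intro d hd
  rw [idxS, Finset.mem_filter] at hd ⊢
  obtain ⟨hdm, hor, hB⟩ := hd
  refine ⟨hdm, ?_, hB⟩
  rcases hor with h | h
  · exact Or.inl (rel_trans hκ ha (rel_symm hrel) h)
  · by_cases hbd : b < d
    · exact Or.inr hbd
    · push_neg at hbd
      exact Or.inl (rel_symm (rel_shrink_right h.le hbd hrel))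

lemma idx_congr (hκ : IsProperSV G κ) {v : V} {a b : ℕ+} (ha : a ∈ κ v) (hb : b ∈ κ v)
    (hrel : rel G κ v a b) : idx G κ v a = idx G κ v b :=
  le_antisymm (Finset.card_le_card (idxS_subset_of_rel hκ ha hb hrel))
    (Finset.card_le_card (idxS_subset_of_rel hκ hb ha (rel_symm hrel)))

lemma idx_anti {v : V} {a b : ℕ+} (ha : a ∈ κ v) (hb : b ∈ κ v) (hab : a ≤ b) :
    idx G κ v b ≤ idx G κ v a :=
  Finset.card_le_card (idxS_subset ha hb hab)

lemma idx_lt (hκ : IsProperSV G κ) {v : V} {a b : ℕ+} (ha : a ∈ κ v) (hb : b ∈ κ v) (hab : a < b)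
    (hnr : ¬ rel G κ v a b) : idx G κ v b < idx G κ v a := by
  refine Finset.card_lt_card ⟨idxS_subset ha hb hab.le, fun hs => ?_⟩
  have h1 := hs (blkmin_mem_idxS hκ ha)
  rw [idxS, Finset.mem_filter] at h1
  rcases h1.2.1 with h | h
  · have hm := blkmin_mem (G := G) (κ := κ) ha
    exact hnr (rel_trans hκ hm.1 hm.2 (rel_symm h))
  · exact absurd ((blkmin_le ha).trans_lt hab) (not_lt.mpr h.le)

lemma rel_of_idx_eq (hκ : IsProperSV G κ) {v : V} {a b : ℕ+} (ha : a ∈ κ v) (hb : b ∈ κ v)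
    (h : idx G κ v a = idx G κ v b) : rel G κ v a b := by
  rcases lt_trichotomy a b with hab | hab | hab
  · by_contra hnr
    exact absurd h (ne_of_gt (idx_lt hκ ha hb hab hnr))
  · subst hab; exact rel_refl v a
  · by_contra hnr
    exact absurd h (ne_of_lt (idx_lt hκ hb ha hab (fun hr => hnr (rel_symm hr))))

lemma lt_of_idx_lt (hκ : IsProperSV G κ) {v : V} {a b : ℕ+} (ha : a ∈ κ v) (hb : b ∈ κ v)
    (h : idx G κ v a < idx G κ v b) : b < a := by
  rcases lt_trichotomy a b with hab | hab | hab
  · exact absurd h (not_lt.mpr (idx_anti ha hb hab.le))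
  · subst hab; exact absurd h (lt_irrefl _)
  · exact hab

end Krom
namespace Krom

variable {V : Type*} {G : SimpleGraph V} {κ : V → Finset ℕ+}

lemma idx_max (hκ : IsProperSV G κ) {v : V} (hne : (κ v).Nonempty) :
    idx G κ v ((κ v).max' hne) = 1 := by
  set a := (κ v).max' hne with ha
  have hmem : a ∈ κ v := (κ v).max'_mem hne
  have : idxS G κ v a = {blkmin G κ v a} := by
    ext d
    simp only [Finset.mem_singleton]
    constructor
    · intro hd
      rw [idxS, Finset.mem_filter] at hd
      obtain ⟨hdm, hor, hB⟩ := hd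
      rcases hor with h | h
      · exact eq_blkmin_of_bmin hκ hmem hdm h hB
      · exact absurd ((κ v).le_max' d hdm) (not_le.mpr h)
    · intro hd; subst hd; exact blkmin_mem_idxS hκ hmem
  rw [idx, this, Finset.card_singleton]

lemma idx_step (hκ : IsProperSV G κ) {v : V} {a : ℕ+} (ha : a ∈ κ v)
    (hT : ∃ c ∈ κ v, c < a ∧ ¬ rel G κ v a c) :
    ∃ b ∈ κ v, idx G κ v b = idx G κ v a + 1 := by
  set T := (κ v).filter (fun c => c < a ∧ ¬ rel G κ v a c) with hTdef
  have hTne : T.Nonempty := by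
    obtain ⟨c, hc1, hc2, hc3⟩ := hT
    exact ⟨c, by simp [hTdef, hc1, hc2, hc3]⟩
  set b := T.max' hTne with hbdef
  have hbT : b ∈ T := T.max'_mem hTne
  rw [hTdef, Finset.mem_filter] at hbT
  obtain ⟨hbm, hba, hnr⟩ := hbT
  refine ⟨b, hbm, ?_⟩
  have hkey : idxS G κ v b = insert (blkmin G κ v b) (idxS G κ v a) := by
    ext d
    rw [Finset.mem_insert]
    constructor
    · intro hd
      rw [idxS, Finset.mem_filter] at hd
      obtain ⟨hdm, hor, hB⟩ := hd
      by_cases hrb : rel G κ v b d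
      · exact Or.inl (eq_blkmin_of_bmin hκ hbm hdm hrb hB)
      · have hbd : b < d := hor.resolve_left hrb
        refine Or.inr ?_
        rw [idxS, Finset.mem_filter]
        refine ⟨hdm, ?_, hB⟩
        by_cases had : a < d
        · exact Or.inr had
        · push_neg at had
          rcases eq_or_lt_of_le had with h | h
          · exact Or.inl (by rw [h]; exact rel_refl v a)
          · by_contra hx
            push_neg at hx
            have hnad : ¬ rel G κ v a d := fun hr => hx.1 hr
            have hdT : d ∈ T := by simp [hTdef, hdm, h, hnad]
            exact absurd (T.le_max' d hdT) (not_le.mpr hbd)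
    · intro hd
      rcases hd with h | h
      · subst h; exact blkmin_mem_idxS hκ hbm
      · exact idxS_subset hbm ha hba.le h
  have hnotmem : blkmin G κ v b ∉ idxS G κ v a := by
    intro hmem
    rw [idxS, Finset.mem_filter] at hmem
    rcases hmem.2.1 with h | h
    · have hm := blkmin_mem (G := G) (κ := κ) hbm
      exact hnr (rel_trans hκ hm.1 h (rel_symm hm.2))
    · exact absurd ((blkmin_le hbm).trans_lt hba) (not_lt.mpr h.le)
  rw [idx, idx, hkey, Finset.card_insert_of_notMem hnotmem]

lemma idx_surj (hκ : IsProperSV G κ) {v : V} (hne : (κ v).Nonempty) :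
    ∀ j : ℕ, 1 ≤ j → j ≤ idx G κ v ((κ v).min' hne) → ∃ a ∈ κ v, idx G κ v a = j := by
  intro j
  induction j with
  | zero => omega
  | succ n ih =>
    intro _ hle
    rcases Nat.eq_zero_or_pos n with hn | hn
    · subst hn
      exact ⟨(κ v).max' hne, (κ v).max'_mem hne, idx_max hκ hne⟩
    · obtain ⟨a, ham, hia⟩ := ih hn (le_trans (Nat.le_succ n) hle)
      have hmm : (κ v).min' hne ∈ κ v := (κ v).min'_mem hne
      have hne2 : (κ v).min' hne < a ∧ ¬ rel G κ v a ((κ v).min' hne) := by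
        have h1 : ¬ rel G κ v a ((κ v).min' hne) := by
          intro hr
          have := idx_congr hκ ham hmm hr
          omega
        refine ⟨?_, h1⟩
        rcases eq_or_lt_of_le ((κ v).min'_le a ham) with h | h
        · exact absurd (by rw [← h]; exact rel_refl v _) h1
        · exact h
      obtain ⟨b, hbm, hb⟩ := idx_step hκ ham ⟨_, hmm, hne2⟩
      exact ⟨b, hbm, by omega⟩

lemma idx_le_alpha (hκ : IsProperSV G κ) {v : V} (hne : (κ v).Nonempty) {a : ℕ+}
    (ha : a ∈ κ v) : idx G κ v a ≤ idx G κ v ((κ v).min' hne) :=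
  idx_anti ((κ v).min'_mem hne) ha ((κ v).min'_le a ha)

variable (G κ) in
/-- Canonical α. -/
def calpha (hκ : IsProperSV G κ) (v : V) : ℕ+ :=
  ⟨idx G κ v ((κ v).min' (hκ.1 v)), idx_pos hκ ((κ v).min'_mem (hκ.1 v))⟩

variable (G κ) in
/-- Canonical block labeling: `clam (v, i)` is the `i`-th block from the top of `κ v`. -/
def clam (p : V × ℕ+) : Finset ℕ+ :=
  (κ p.1).filter fun a => idx G κ p.1 a = (p.2 : ℕ)

variable (G κ) in
/-- Canonical orientation's edge relation. -/
def cedge (hκ : IsProperSV G κ) (p q : V × ℕ+) : Prop :=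
  ClanAdj G (calpha G κ hκ) p q ∧ FinsetAllLT (clam G κ p) (clam G κ q)

lemma mem_clam {p : V × ℕ+} {a : ℕ+} :
    a ∈ clam G κ p ↔ a ∈ κ p.1 ∧ idx G κ p.1 a = (p.2 : ℕ) := Finset.mem_filter

lemma clam_nonempty (hκ : IsProperSV G κ) {v : V} {i : ℕ+}
    (h : i ≤ calpha G κ hκ v) : (clam G κ (v, i)).Nonempty := by
  obtain ⟨a, ham, hia⟩ := idx_surj hκ (hκ.1 v) (i : ℕ) i.one_le
    (by rwa [← PNat.coe_le_coe] at h)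
  exact ⟨a, mem_clam.mpr ⟨ham, hia⟩⟩

lemma clanVert_of_mem_clam (hκ : IsProperSV G κ) {v : V} {i : ℕ+} {a : ℕ+}
    (ha : a ∈ clam G κ (v, i)) : ClanVert (calpha G κ hκ) (v, i) := by
  rw [mem_clam] at ha
  show i ≤ calpha G κ hκ v
  rw [← PNat.coe_le_coe]
  calc (i : ℕ) = idx G κ v a := ha.2.symm
  _ ≤ _ := idx_le_alpha hκ (hκ.1 v) ha.1

lemma clam_lt (hκ : IsProperSV G κ) {v : V} {i j : ℕ+} (hij : i < j) {a b : ℕ+}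
    (ha : a ∈ clam G κ (v, j)) (hb : b ∈ clam G κ (v, i)) : a < b := by
  rw [mem_clam] at ha hb
  refine lt_of_idx_lt hκ hb.1 ha.1 ?_
  rw [ha.2, hb.2]
  exact_mod_cast hij

lemma clam_comparable (hκ : IsProperSV G κ) {v w : V} (hadj : G.Adj v w) (i j : ℕ+) :
    FinsetAllLT (clam G κ (v, i)) (clam G κ (w, j)) ∨
      FinsetAllLT (clam G κ (w, j)) (clam G κ (v, i)) := by
  by_cases h1 : ∀ a ∈ clam G κ (v, i), ∀ b ∈ clam G κ (w, j), a < b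
  · exact Or.inl h1
  · push_neg at h1
    obtain ⟨a, ha, b, hb, hba⟩ := h1
    rw [mem_clam] at ha hb
    have hba' : b < a := lt_of_le_of_ne hba (mem_ne_of_adj hκ hadj ha.1 hb.1)
    refine Or.inr ?_
    intro b' hb' a' ha'
    rw [mem_clam] at ha' hb'
    by_contra hle
    push_neg at hle
    have ha'b' : a' < b' := lt_of_le_of_ne hle (mem_ne_of_adj hκ hadj.symm hb'.1 ha'.1)
    have hrelv : rel G κ v a a' := rel_of_idx_eq hκ ha.1 ha'.1 (by rw [ha.2, ha'.2])
    have hrelw : rel G κ w b b' := rel_of_idx_eq hκ hb.1 hb'.1 (by rw [hb.2, hb'.2])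
    by_cases hc : b' < a
    · exact hrelv w hadj b' hb'.1 (Or.inr ⟨ha'b', hc⟩)
    · push_neg at hc
      have hab' : a < b' := lt_of_le_of_ne hc (mem_ne_of_adj hκ hadj ha.1 hb'.1).symm
      exact hrelw v hadj.symm a ha.1 (Or.inl ⟨hba', hab'⟩)

lemma clanAdj_symm {α : V → ℕ+} {p q : V × ℕ+} (h : ClanAdj G α p q) : ClanAdj G α q p :=
  ⟨h.2.1, h.1, h.2.2.imp (fun h => h.symm) (fun h => ⟨h.1.symm, h.2.symm⟩)⟩

lemma cedge_or (hκ : IsProperSV G κ) {p q : V × ℕ+}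
    (h : ClanAdj G (calpha G κ hκ) p q) :
    cedge G κ hκ p q ∨ cedge G κ hκ q p := by
  obtain ⟨v, i⟩ := p
  obtain ⟨w, j⟩ := q
  rcases h.2.2 with hadj | ⟨heq, hne⟩
  · rcases clam_comparable hκ hadj i j with hlt | hlt
    · exact Or.inl ⟨h, hlt⟩
    · exact Or.inr ⟨clanAdj_symm h, hlt⟩
  · dsimp at heq hne
    subst heq
    rcases lt_or_gt_of_ne hne with hij | hij
    · exact Or.inr ⟨clanAdj_symm h, fun a ha b hb => clam_lt hκ hij ha hb⟩
    · exact Or.inl ⟨h, fun a ha b hb => clam_lt hκ hij ha hb⟩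

lemma cedge_irrefl (hκ : IsProperSV G κ) {p q : V × ℕ+} (h1 : cedge G κ hκ p q)
    (h2 : cedge G κ hκ q p) : False := by
  obtain ⟨a, ha⟩ := clam_nonempty hκ h1.1.1
  obtain ⟨b, hb⟩ := clam_nonempty hκ h1.1.2.1
  have hab := h1.2 _ ha _ hb
  have hba := h2.2 _ hb _ ha
  exact absurd (hab.trans hba) (lt_irrefl _)

lemma cedge_acyclic (hκ : IsProperSV G κ) (p : V × ℕ+) :
    ¬ Relation.TransGen (cedge G κ hκ) p p := by
  classical
  set f : V × ℕ+ → ℕ+ := fun p => if h : (clam G κ p).Nonempty then (clam G κ p).min' h else 1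
    with hf
  have hstep : ∀ p q, cedge G κ hκ p q → f p < f q := by
    intro p q h
    have hp : (clam G κ p).Nonempty := clam_nonempty hκ h.1.1
    have hq : (clam G κ q).Nonempty := clam_nonempty hκ h.1.2.1
    rw [hf]
    simp only [dif_pos hp, dif_pos hq]
    exact h.2 _ ((clam G κ p).min'_mem hp) _ ((clam G κ q).min'_mem hq)
  intro h
  have : ∀ q, Relation.TransGen (cedge G κ hκ) p q → f p < f q := by
    intro q hq
    induction hq with
    | single h => exact hstep _ _ h
    | tail _ h ih => exact ih.trans (hstep _ _ h)
  exact absurd (this p h) (lt_irrefl _)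

variable (G κ) in
def cornt (hκ : IsProperSV G κ) : ClanOrientation G (calpha G κ hκ) where
  edge := cedge G κ hκ
  edge_adj := fun _ _ h => h.1
  oriented := fun p q hadj =>
    ⟨fun h h' => cedge_irrefl hκ h h', fun h => (cedge_or hκ hadj).resolve_right h⟩
  acyclic := cedge_acyclic hκ

end Krom
namespace Krom

variable {V : Type*} {G : SimpleGraph V} {κ : V → Finset ℕ+}

lemma pnat_lt_succ (i : ℕ+) : i < i + 1 := by
  rw [← PNat.coe_lt_coe]; simp

lemma pnat_succ_ne (i : ℕ+) : i + 1 ≠ i := ne_of_gt (pnat_lt_succ i)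

lemma cornt_edge (hκ : IsProperSV G κ) : (cornt G κ hκ).edge = cedge G κ hκ := rfl

lemma cmulti (hκ : IsProperSV G κ) : IsMultiOrientation (cornt G κ hκ) := by
  intro v i hi
  have hvert1 : ClanVert (calpha G κ hκ) (v, i + 1) := hi
  have hvert0 : ClanVert (calpha G κ hκ) (v, i) := le_trans (pnat_lt_succ i).le hi
  have hne1 : (clam G κ (v, i + 1)).Nonempty := clam_nonempty hκ hvert1
  have hne0 : (clam G κ (v, i)).Nonempty := clam_nonempty hκ hvert0
  set c := (clam G κ (v, i + 1)).max' hne1 with hc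
  set d := (clam G κ (v, i)).min' hne0 with hd
  have hcm : c ∈ clam G κ (v, i + 1) := Finset.max'_mem _ _
  have hdm : d ∈ clam G κ (v, i)  := Finset.min'_mem _ _
  have hcd : c < d := clam_lt hκ (pnat_lt_succ i) hcm hdm
  have hcm' := mem_clam.mp hcm
  have hdm' := mem_clam.mp hdm
  have hnrel : ¬ rel G κ v c d := by
    intro hr
    have h1 := idx_congr hκ hcm'.1 hdm'.1 hr
    rw [hcm'.2, hdm'.2] at h1
    have h2 : ((i + 1 : ℕ+) : ℕ) = (i : ℕ) := h1
    rw [PNat.add_coe, PNat.one_coe] at h2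
    omega
  rw [rel] at hnrel
  push_neg at hnrel
  obtain ⟨u, hadj, x, hxu, hbtwn⟩ := hnrel
  have hx : c < x ∧ x < d := by
    rcases hbtwn with h | h
    · exact h
    · exact absurd (h.1.trans h.2) (not_lt.mpr hcd.le)
  set j : ℕ+ := ⟨idx G κ u x, idx_pos hκ hxu⟩ with hj
  have hxj : x ∈ clam G κ (u, j) := mem_clam.mpr ⟨hxu, rfl⟩
  have hvertj : ClanVert (calpha G κ hκ) (u, j) := clanVert_of_mem_clam hκ hxj
  have hbounds : ∀ b ∈ clam G κ (u, j), c < b ∧ b < d := by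
    intro b hb
    have hb' := mem_clam.mp hb
    have hrxb : rel G κ u x b := rel_of_idx_eq hκ hxu hb'.1 (by rw [hb'.2]; simp [hj])
    constructor
    · by_contra hbc
      push_neg at hbc
      have hbc' : b < c := lt_of_le_of_ne hbc (mem_ne_of_adj hκ hadj hcm'.1 hb'.1)
      exact hrxb v hadj.symm c hcm'.1 (Or.inr ⟨hbc', hx.1⟩)
    · by_contra hdb
      push_neg at hdb
      have hdb' : d < b := lt_of_le_of_ne hdb (mem_ne_of_adj hκ hadj hdm'.1 hb'.1).symm
      exact hrxb v hadj.symm d hdm'.1 (Or.inl ⟨hx.2, hdb'⟩)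
  have e1 : cedge G κ hκ (v, i + 1) (u, j) := by
    refine ⟨⟨hvert1, hvertj, Or.inl hadj⟩, ?_⟩
    intro a ha b hb
    exact lt_of_le_of_lt (Finset.le_max' _ a ha) (hbounds b hb).1
  have e2 : cedge G κ hκ (u, j) (v, i) := by
    refine ⟨⟨hvertj, hvert0, Or.inl hadj.symm⟩, ?_⟩
    intro b hb a ha
    exact lt_of_lt_of_le (hbounds b hb).2 (Finset.min'_le _ a ha)
  have e0 : cedge G κ hκ (v, i + 1) (v, i) := by
    refine ⟨⟨hvert1, hvert0, Or.inr ⟨rfl, by simp [pnat_succ_ne]⟩⟩, ?_⟩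
    exact fun a ha b hb => clam_lt hκ (pnat_lt_succ i) ha hb
  refine ⟨[(v, i + 1), (v, i)], [(v, i + 1), (u, j), (v, i)], ?_, ?_, ?_⟩
  · intro h
    have := congrArg List.length h
    simp at this
  · exact ⟨by simp [cornt_edge, List.Chain', List.isChain_cons_cons, e0], rfl, rfl⟩
  · exact ⟨by simp [cornt_edge, List.Chain', List.isChain_cons_cons, e1, e2], rfl, rfl⟩

variable (G κ) in
/-- The canonical acyclic multi-orientation attached to a proper set coloring. -/
def cMAO (hκ : IsProperSV G κ) : MAO G where
  α := calpha G κ hκ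
  ornt := cornt G κ hκ
  multi := cmulti hκ

end Krom
namespace Krom

section Paths
variable {W : Type*} {r : W → W → Prop}

lemma dipath_transGen : ∀ (l : List W) (a b : W), IsDiPath r l a b → 2 ≤ l.length →
    Relation.TransGen r a b := by
  intro l
  induction l with
  | nil => intro a b h hl; simp at hl
  | cons x t ih =>
    intro a b h hl
    obtain ⟨hch, hh, hlast⟩ := h
    have hax : x = a := by simpa using hh
    cases t with
    | nil => simp at hl
    | cons y t' =>
      rw [List.Chain', List.isChain_cons_cons] at hch
      have hxy : r x y := hch.1
      cases t' with
      | nil =>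
        have hyb : y = b := by simpa using hlast
        exact hax ▸ hyb ▸ Relation.TransGen.single hxy
      | cons z t'' =>
        have h2 : IsDiPath r (y :: z :: t'') y b :=
          ⟨hch.2, rfl, by simpa [List.getLast?_cons_cons] using hlast⟩
        have h3 := ih y b h2 (by simp)
        exact hax ▸ Relation.TransGen.head hxy h3

lemma dipath_ne_transGen (l : List W) (a b : W) (h : IsDiPath r l a b) (hab : a ≠ b) :
    Relation.TransGen r a b := by
  match l with
  | [] => obtain ⟨_, hh, _⟩ := h; simp at hh
  | [x] =>
    obtain ⟨_, hh, hl⟩ := h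
    simp only [List.head?_cons, Option.some.injEq] at hh
    simp only [List.getLast?_singleton, Option.some.injEq] at hl
    exact absurd (hh.symm.trans hl) hab
  | x :: y :: t => exact dipath_transGen _ _ _ h (by simp)

lemma dipath_short (l : List W) (a b : W) (h : IsDiPath r l a b) (hl : l.length < 3) :
    l = [a, b] ∨ l = [a] ∨ l = [] := by
  match l with
  | [] => exact Or.inr (Or.inr rfl)
  | [x] =>
    obtain ⟨_, hh, _⟩ := h
    simp only [List.head?_cons, Option.some.injEq] at hh
    exact Or.inr (Or.inl (by rw [hh]))
  | [x, y] =>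
    obtain ⟨_, hh, hla⟩ := h
    simp only [List.head?_cons, Option.some.injEq] at hh
    have : (([x, y] : List W)).getLast? = some y := rfl
    rw [this] at hla
    simp only [Option.some.injEq] at hla
    exact Or.inl (by rw [hh, hla])
  | x :: y :: z :: t => exfalso; simp only [List.length_cons] at hl; omega

lemma dipath_second (l : List W) (a b : W) (h : IsDiPath r l a b) (hl : 3 ≤ l.length) :
    ∃ q, r a q ∧ Relation.TransGen r q b := by
  match l with
  | [] => simp at hl
  | [x] => simp at hl
  | x :: y :: t =>
    obtain ⟨hch, hh, hlast⟩ := h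
    have hax : x = a := by simpa using hh
    rw [List.Chain', List.isChain_cons_cons] at hch
    refine ⟨y, hax ▸ hch.1, ?_⟩
    have h2 : IsDiPath r (y :: t) y b :=
      ⟨hch.2, rfl, by simpa [List.getLast?_cons_cons] using hlast⟩
    refine dipath_transGen _ _ _ h2 ?_
    simp only [List.length_cons] at hl ⊢
    omega

end Paths

variable {V : Type*} {G : SimpleGraph V} {D : MAO G} {lam : D.Verts → Finset ℕ+}

variable (D lam) in
def lamx (p : V × ℕ+) : Finset ℕ+ := if h : ClanVert D.α p then lam ⟨p, h⟩ else ∅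

variable (D lam) in
def kap (v : V) : Finset ℕ+ := (Finset.Icc 1 (D.α v)).biUnion fun i => lamx D lam (v, i)

lemma clanVert_of_mem_lamx {p : V × ℕ+} {a : ℕ+} (h : a ∈ lamx D lam p) :
    ClanVert D.α p := by
  by_contra hc; rw [lamx, dif_neg hc] at h; simp at h

lemma mem_kap {v : V} {a : ℕ+} : a ∈ kap D lam v ↔ ∃ i, a ∈ lamx D lam (v, i) := by
  rw [kap]; simp only [Finset.mem_biUnion, Finset.mem_Icc]
  constructor
  · rintro ⟨i, _, h⟩; exact ⟨i, h⟩
  · rintro ⟨i, h⟩; exact ⟨i, ⟨i.one_le, clanVert_of_mem_lamx h⟩, h⟩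

section Rev

variable {hne0 : True}

lemma lamx_nonempty (hne : ∀ w, (lam w).Nonempty) {p : V × ℕ+} (h : ClanVert D.α p) : (lamx D lam p).Nonempty := by
  rw [lamx, dif_pos h]; exact hne _

lemma allLT_of_edge (hlt : ∀ p q : D.Verts, D.ornt.edge p.1 q.1 → FinsetAllLT (lam p) (lam q)) {p q : V × ℕ+} (h : D.ornt.edge p q) :
    FinsetAllLT (lamx D lam p) (lamx D lam q) := by
  have hadj := D.ornt.edge_adj _ _ h
  rw [lamx, dif_pos hadj.1, lamx, dif_pos hadj.2.1]
  exact hlt ⟨p, hadj.1⟩ ⟨q, hadj.2.1⟩ h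

lemma allLT_trans {S T U : Finset ℕ+} (h1 : FinsetAllLT S T) (h2 : FinsetAllLT T U)
    (hT : T.Nonempty) : FinsetAllLT S U := by
  obtain ⟨t, ht⟩ := hT
  exact fun a ha b hb => (h1 a ha t ht).trans (h2 t ht b hb)

lemma allLT_transGen (hne : ∀ w, (lam w).Nonempty) (hlt : ∀ p q : D.Verts, D.ornt.edge p.1 q.1 → FinsetAllLT (lam p) (lam q)) {p q : V × ℕ+} (h : Relation.TransGen D.ornt.edge p q) :
    FinsetAllLT (lamx D lam p) (lamx D lam q) := by
  induction h with
  | single h => exact allLT_of_edge hlt h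
  | tail hpc hcb ih =>
    exact allLT_trans ih (allLT_of_edge hlt hcb)
      (lamx_nonempty hne (D.ornt.edge_adj _ _ hcb).1)

lemma edge_total {p q : V × ℕ+} (h : ClanAdj G D.α p q) :
    D.ornt.edge p q ∨ D.ornt.edge q p := by
  by_cases he : D.ornt.edge p q
  · exact Or.inl he
  · exact Or.inr ((D.ornt.oriented q p (clanAdj_symm h)).mpr he)

lemma blocks_step (hne : ∀ w, (lam w).Nonempty) (hlt : ∀ p q : D.Verts, D.ornt.edge p.1 q.1 → FinsetAllLT (lam p) (lam q)) {v : V} {i : ℕ+} (hi : i + 1 ≤ D.α v) :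
    FinsetAllLT (lamx D lam (v, i + 1)) (lamx D lam (v, i)) := by
  obtain ⟨p₁, p₂, hpne, h1, h2⟩ := D.multi v i hi
  have ht : Relation.TransGen D.ornt.edge (v, i + 1) (v, i) :=
    dipath_ne_transGen _ _ _ h1 (by simp [Prod.ext_iff, pnat_succ_ne])
  exact allLT_transGen hne hlt ht

lemma blocks_lt_aux (hne : ∀ w, (lam w).Nonempty) (hlt : ∀ p q : D.Verts, D.ornt.edge p.1 q.1 → FinsetAllLT (lam p) (lam q)) {v : V} : ∀ n : ℕ, ∀ i j : ℕ+, (j : ℕ) = (i : ℕ) + n + 1 →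
    j ≤ D.α v → FinsetAllLT (lamx D lam (v, j)) (lamx D lam (v, i)) := by
  intro n
  induction n with
  | zero =>
    intro i j hj hja
    have hj1 : j = i + 1 := by
      apply PNat.coe_injective
      rw [PNat.add_coe, PNat.one_coe]; omega
    subst hj1
    exact blocks_step hne hlt hja
  | succ n ih =>
    intro i j hj hja
    have hkpos : 0 < (j : ℕ) - 1 := by omega
    set k : ℕ+ := ⟨(j : ℕ) - 1, hkpos⟩ with hk
    have hck : (k : ℕ) = (j : ℕ) - 1 := rfl
    have hj1 : 1 ≤ (j : ℕ) := j.one_le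
    have hk1 : j = k + 1 := by
      apply PNat.coe_injective
      rw [PNat.add_coe, PNat.one_coe]; omega
    have hkj : k ≤ j := by
      rw [← PNat.coe_le_coe]; omega
    have hkα : k ≤ D.α v := le_trans hkj hja
    have h1 : FinsetAllLT (lamx D lam (v, j)) (lamx D lam (v, k)) := by
      rw [hk1]
      exact blocks_step hne hlt (hk1 ▸ hja)
    have h2 : FinsetAllLT (lamx D lam (v, k)) (lamx D lam (v, i)) := by
      refine ih i k ?_ hkα
      omega
    exact allLT_trans h1 h2 (lamx_nonempty hne hkα)

lemma blocks_lt (hne : ∀ w, (lam w).Nonempty) (hlt : ∀ p q : D.Verts, D.ornt.edge p.1 q.1 → FinsetAllLT (lam p) (lam q)) {v : V} {i j : ℕ+} (hij : i < j) (hj : j ≤ D.α v) :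
    FinsetAllLT (lamx D lam (v, j)) (lamx D lam (v, i)) := by
  have hcc := (PNat.coe_lt_coe _ _).mpr hij
  exact blocks_lt_aux hne hlt ((j : ℕ) - (i : ℕ) - 1) i j (by omega) hj

lemma lamx_disj (hne : ∀ w, (lam w).Nonempty) (hlt : ∀ p q : D.Verts, D.ornt.edge p.1 q.1 → FinsetAllLT (lam p) (lam q)) {v : V} {i j : ℕ+} (hij : i ≠ j) :
    Disjoint (lamx D lam (v, i)) (lamx D lam (v, j))  := by
  rw [Finset.disjoint_left]
  intro x hx hx'
  have hvi := clanVert_of_mem_lamx hx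
  have hvj := clanVert_of_mem_lamx hx'
  rcases lt_or_gt_of_ne hij with h | h
  · exact absurd (blocks_lt hne hlt h hvj x hx' x hx) (lt_irrefl x)
  · exact absurd (blocks_lt hne hlt h hvi x hx x hx') (lt_irrefl x)

lemma kap_proper (hne : ∀ w, (lam w).Nonempty) (hlt : ∀ p q : D.Verts, D.ornt.edge p.1 q.1 → FinsetAllLT (lam p) (lam q)) : IsProperSV G (kap D lam) := by
  constructor
  · intro v
    obtain ⟨a, ha⟩ := lamx_nonempty hne (show ClanVert D.α (v, 1) from (D.α v).one_le)
    exact ⟨a, mem_kap.mpr ⟨1, ha⟩⟩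
  · intro u v huv
    rw [Finset.disjoint_left]
    intro x hxu hxv
    obtain ⟨i, hi⟩ := mem_kap.mp hxu
    obtain ⟨j, hj⟩ := mem_kap.mp hxv
    have hadj : ClanAdj G D.α (u, i) (v, j) :=
      ⟨clanVert_of_mem_lamx hi, clanVert_of_mem_lamx hj, Or.inl huv⟩
    rcases edge_total hadj with he | he
    · exact absurd (allLT_of_edge hlt he x hi x hj) (lt_irrefl x)
    · exact absurd (allLT_of_edge hlt he x hj x hi) (lt_irrefl x)

lemma krel_aux (hne : ∀ w, (lam w).Nonempty) (hlt : ∀ p q : D.Verts, D.ornt.edge p.1 q.1 → FinsetAllLT (lam p) (lam q)) {v : V} {i j a b : ℕ+} (ha : a ∈ lamx D lam (v, i))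
    (hb : b ∈ lamx D lam (v, j)) (hij : i < j) : ¬ rel G (kap D lam) v a b := by
  intro hrel
  have hvi : ClanVert D.α (v, i) := clanVert_of_mem_lamx ha
  have hvj : ClanVert D.α (v, j) := clanVert_of_mem_lamx hb
  have hij' := (PNat.coe_lt_coe _ _).mpr hij
  have hjα := (PNat.coe_le_coe _ _).mpr (show j ≤ D.α v from hvj)
  have hii : i + 1 ≤ D.α v := by
    rw [← PNat.coe_le_coe, PNat.add_coe, PNat.one_coe]; omega
  have hvi1 : ClanVert D.α (v, i + 1) := hii
  obtain ⟨p₁, p₂, hpne, h1, h2⟩ := D.multi v i hii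
  have hlong : ∃ l, IsDiPath D.ornt.edge l (v, i + 1) (v, i) ∧ 3 ≤ l.length := by
    by_cases hl1 : 3 ≤ p₁.length
    · exact ⟨p₁, h1, hl1⟩
    · by_cases hl2 : 3 ≤ p₂.length
      · exact ⟨p₂, h2, hl2⟩
      · exfalso
        have hne12 : ((v, i + 1) : V × ℕ+) ≠ (v, i) := by simp [Prod.ext_iff, pnat_succ_ne]
        have e1 := dipath_short p₁ _ _ h1 (by omega)
        have e2 := dipath_short p₂ _ _ h2 (by omega)
        have hp1 : p₁ = [(v, i + 1), (v, i)] := by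
          rcases e1 with h | h | h
          · exact h
          · rw [h] at h1; obtain ⟨_, _, hl⟩ := h1
            simp only [List.getLast?_singleton, Option.some.injEq] at hl
            exact absurd hl hne12
          · rw [h] at h1; obtain ⟨_, hh, _⟩ := h1; simp at hh
        have hp2 : p₂ = [(v, i + 1), (v, i)] := by
          rcases e2 with h | h | h
          · exact h
          · rw [h] at h2; obtain ⟨_, _, hl⟩ := h2
            simp only [List.getLast?_singleton, Option.some.injEq] at hl
            exact absurd hl hne12
          · rw [h] at h2; obtain ⟨_, hh, _⟩ := h2; simp at hh
        exact hpne (hp1.trans hp2.symm)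
  obtain ⟨l, hl, hl3⟩ := hlong
  obtain ⟨q, heq, htg⟩ := dipath_second _ _ _ hl hl3
  have hqne : q ≠ (v, i) := fun h => D.ornt.acyclic _ (h ▸ htg)
  have hadjq := D.ornt.edge_adj _ _ heq
  have hvq : ClanVert D.α q := hadjq.2.1
  have hAll1 : FinsetAllLT (lamx D lam (v, i + 1)) (lamx D lam q) := allLT_of_edge hlt heq
  have hAll2 : FinsetAllLT (lamx D lam q) (lamx D lam (v, i)) := allLT_transGen hne hlt htg
  obtain ⟨w, l'⟩ := q
  have hwv : G.Adj v w := by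
    rcases hadjq.2.2 with h | h
    · exact h
    · exfalso
      obtain ⟨hv, hnel⟩ := h
      dsimp at hv hnel
      subst hv
      have hl'v : ClanVert D.α (v, l') := hvq
      have hl'α := (PNat.coe_le_coe _ _).mpr (show l' ≤ D.α v from hl'v)
      have hlt1 : (l' : ℕ) < (i : ℕ) + 1 := by
        by_contra hge
        push_neg at hge
        have hge' : i + 1 ≤ l' := by
          rw [← PNat.coe_le_coe, PNat.add_coe, PNat.one_coe]; omega
        rcases eq_or_lt_of_le hge' with h' | h'
        · exact hnel h'
        · have h3 := blocks_lt hne hlt h' hl'v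
          obtain ⟨y, hy⟩ := lamx_nonempty hne hl'v
          obtain ⟨z, hz⟩ := lamx_nonempty hne hvi1
          exact absurd ((hAll1 z hz y hy).trans (h3 y hy z hz)) (lt_irrefl z)
      have hgt : (i : ℕ) < (l' : ℕ) := by
        by_contra hle
        push_neg at hle
        have hle' : l' ≤ i := by rw [← PNat.coe_le_coe]; omega
        rcases eq_or_lt_of_le hle' with h' | h'
        · exact hqne (by rw [h'])
        · have h3 := blocks_lt hne hlt h' (show i ≤ D.α v from hvi)
          obtain ⟨y, hy⟩ := lamx_nonempty hne hl'v
          obtain ⟨z, hz⟩ := lamx_nonempty hne (show ClanVert D.α (v, i) from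
            le_trans (pnat_lt_succ i).le hii)
          exact absurd ((hAll2 y hy z hz).trans (h3 z hz y hy)) (lt_irrefl y)
      omega
  obtain ⟨y, hy⟩ := lamx_nonempty hne hvq
  have hya : y < a := hAll2 y hy a ha
  have hby : b < y := by
    have hj1 : i + 1 ≤ j := by
      rw [← PNat.coe_le_coe, PNat.add_coe, PNat.one_coe]; omega
    rcases eq_or_lt_of_le hj1 with h' | h'
    · exact hAll1 b (by rw [h']; exact hb) y hy
    · obtain ⟨z, hz⟩ := lamx_nonempty hne hvi1
      exact (blocks_lt hne hlt h' hvj b hb z hz).trans (hAll1 z hz y hy)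
  exact hrel w hwv y (mem_kap.mpr ⟨l', hy⟩) (Or.inr ⟨hby, hya⟩)

lemma kap_rel_iff (hne : ∀ w, (lam w).Nonempty) (hlt : ∀ p q : D.Verts, D.ornt.edge p.1 q.1 → FinsetAllLT (lam p) (lam q)) {v : V} {i j a b : ℕ+} (ha : a ∈ lamx D lam (v, i))
    (hb : b ∈ lamx D lam (v, j)) : rel G (kap D lam) v a b ↔ i = j := by
  constructor
  · intro hrel
    by_contra hij
    rcases lt_or_gt_of_ne hij with h | h
    · exact krel_aux hne hlt ha hb h hrel
    · exact krel_aux hne hlt hb ha h (rel_symm hrel)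
  · intro h
    subst h
    intro u hu x hx hB
    obtain ⟨l, hlm⟩ := mem_kap.mp hx
    have hadj : ClanAdj G D.α (v, i) (u, l) :=
      ⟨clanVert_of_mem_lamx ha, clanVert_of_mem_lamx hlm, Or.inl hu⟩
    rcases edge_total hadj with he | he
    · have h1 : a < x := allLT_of_edge hlt he a ha x hlm
      have h2 : b < x := allLT_of_edge hlt he b hb x hlm
      rcases hB with ⟨_, hc⟩ | ⟨_, hc⟩
      · exact absurd (h2.trans hc) (lt_irrefl _)
      · exact absurd (h1.trans hc) (lt_irrefl _)
    · have h1 : x < a := allLT_of_edge hlt he x hlm a ha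
      have h2 : x < b := allLT_of_edge hlt he x hlm b hb
      rcases hB with ⟨hc, _⟩ | ⟨hc, _⟩
      · exact absurd (hc.trans h1) (lt_irrefl _)
      · exact absurd (hc.trans h2) (lt_irrefl _)

end Rev
end Krom
namespace Krom

variable {V : Type*} {G : SimpleGraph V} {D : MAO G} {lam : D.Verts → Finset ℕ+}

variable (D lam) in
def bm (v : V) (j : ℕ+) : ℕ+ :=
  if h : (lamx D lam (v, j)).Nonempty then (lamx D lam (v, j)).min' h else 1

lemma bm_mem {v : V} {j : ℕ+} (h : (lamx D lam (v, j)).Nonempty) :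
    bm D lam v j ∈ lamx D lam (v, j) := by
  rw [bm, dif_pos h]; exact Finset.min'_mem _ _

lemma bm_le {v : V} {j : ℕ+} {c : ℕ+} (hc : c ∈ lamx D lam (v, j)) :
    bm D lam v j ≤ c := by
  rw [bm, dif_pos ⟨c, hc⟩]; exact Finset.min'_le _ _ hc

section Rev2
variable (hne : ∀ w, (lam w).Nonempty)
variable (hlt : ∀ p q : D.Verts, D.ornt.edge p.1 q.1 → FinsetAllLT (lam p) (lam q))

lemma kap_idx (hne : ∀ w, (lam w).Nonempty)
    (hlt : ∀ p q : D.Verts, D.ornt.edge p.1 q.1 → FinsetAllLT (lam p) (lam q))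
    {v : V} {i a : ℕ+} (ha : a ∈ lamx D lam (v, i)) :
    idx G (kap D lam) v a = (i : ℕ) := by
  have hvi : ClanVert D.α (v, i) := clanVert_of_mem_lamx ha
  have key : idxS G (kap D lam) v a = (Finset.Icc 1 i).image (bm D lam v) := by
    ext d
    simp only [Finset.mem_image, Finset.mem_Icc]
    constructor
    · intro hd
      rw [idxS, Finset.mem_filter] at hd
      obtain ⟨hdm, hor, hB⟩ := hd
      obtain ⟨jd, hjd⟩ := mem_kap.mp hdm
      have hvjd : ClanVert D.α (v, jd) := clanVert_of_mem_lamx hjd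
      have hjdle : jd ≤ i := by
        by_contra hgt
        push_neg at hgt
        have hnr : ¬ rel G (kap D lam) v a d := by
          rw [kap_rel_iff hne hlt ha hjd]
          exact ne_of_lt hgt
        have hda : d < a := blocks_lt hne hlt hgt hvjd d hjd a ha
        rcases hor with h | h
        · exact hnr h
        · exact absurd (h.trans hda) (lt_irrefl _)
      refine ⟨jd, ⟨jd.one_le, hjdle⟩, ?_⟩
      have hbmle : bm D lam v jd ≤ d := bm_le hjd
      rcases eq_or_lt_of_le hbmle with h | h
      · exact h
      · exfalso
        have hbmem : bm D lam v jd ∈ lamx D lam (v, jd) := bm_mem ⟨d, hjd⟩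
        exact hB (bm D lam v jd) (mem_kap.mpr ⟨jd, hbmem⟩) h
          ((kap_rel_iff hne hlt hbmem hjd).mpr rfl)
    · rintro ⟨j, ⟨_, hji⟩, rfl⟩
      have hjα : j ≤ D.α v := le_trans hji hvi
      have hnej := lamx_nonempty hne (show ClanVert D.α (v, j) from hjα)
      have hbmj : bm D lam v j ∈ lamx D lam (v, j) := bm_mem hnej
      rw [idxS, Finset.mem_filter]
      refine ⟨mem_kap.mpr ⟨j, hbmj⟩, ?_, ?_⟩
      · rcases eq_or_lt_of_le hji with h | h
        · exact Or.inl ((kap_rel_iff hne hlt ha hbmj).mpr h.symm)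
        · exact Or.inr (blocks_lt hne hlt h hvi a ha (bm D lam v j) hbmj)
      · intro c hc hcd hrel
        obtain ⟨jc, hjc⟩ := mem_kap.mp hc
        have hjcj : jc = j := (kap_rel_iff hne hlt hjc hbmj).mp hrel
        subst hjcj
        exact absurd hcd (not_lt.mpr (bm_le hjc))
  have hinj : Set.InjOn (bm D lam v) (Finset.Icc 1 i) := by
    intro j hj j' hj' heq
    rw [Finset.coe_Icc, Set.mem_Icc] at hj hj'
    by_contra hne'
    have hd := lamx_disj hne hlt (v := v) hne'
    have h1 : bm D lam v j ∈ lamx D lam (v, j) :=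
      bm_mem (lamx_nonempty hne (show ClanVert D.α (v, j) from le_trans hj.2 hvi))
    have h2 : bm D lam v j' ∈ lamx D lam (v, j') :=
      bm_mem (lamx_nonempty hne (show ClanVert D.α (v, j') from le_trans hj'.2 hvi))
    rw [heq] at h1
    exact Finset.disjoint_left.mp hd h1 h2
  rw [idx, key, Finset.card_image_of_injOn hinj, PNat.card_Icc]
  simp

lemma kap_calpha : calpha G (kap D lam) (kap_proper hne hlt) = D.α := by
  funext v
  have hp := kap_proper (G := G) hne hlt
  have hM : (kap D lam v).min' (hp.1 v) ∈ kap D lam v := Finset.min'_mem _ _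
  obtain ⟨j, hj⟩ := mem_kap.mp hM
  have hvj : ClanVert D.α (v, j) := clanVert_of_mem_lamx hj
  have hjα : j = D.α v := by
    by_contra hne'
    have hlt' : j < D.α v := lt_of_le_of_ne hvj hne'
    obtain ⟨z, hz⟩ := lamx_nonempty hne (show ClanVert D.α (v, D.α v) from le_refl _)
    have h1 : z < (kap D lam v).min' (hp.1 v) := blocks_lt hne hlt hlt' (le_refl _) z hz _ hj
    have h2 : (kap D lam v).min' (hp.1 v) ≤ z := Finset.min'_le _ _ (mem_kap.mpr ⟨_, hz⟩)
    exact absurd (h1.trans_le h2) (lt_irrefl z)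
  apply PNat.coe_injective
  show idx G (kap D lam) v ((kap D lam v).min' (hp.1 v)) = ((D.α v : ℕ+) : ℕ)
  rw [kap_idx hne hlt hj, hjα]

lemma kap_clam (hne : ∀ w, (lam w).Nonempty)
    (hlt : ∀ p q : D.Verts, D.ornt.edge p.1 q.1 → FinsetAllLT (lam p) (lam q))
    (p : V × ℕ+) : clam G (kap D lam) p = lamx D lam p := by
  obtain ⟨v, i⟩ := p
  ext a
  rw [mem_clam]
  constructor
  · rintro ⟨ham, hidx⟩
    obtain ⟨j, hj⟩ := mem_kap.mp ham
    have hji : j = i := by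
      apply PNat.coe_injective
      rw [← kap_idx hne hlt hj]
      exact hidx
    subst hji
    exact hj
  · intro ha
    exact ⟨mem_kap.mpr ⟨i, ha⟩, kap_idx hne hlt ha⟩

lemma kap_cedge : cedge G (kap D lam) (kap_proper hne hlt) = D.ornt.edge := by
  refine funext fun p => funext fun q => propext ?_
  constructor
  · rintro ⟨hadj, hAll⟩
    rw [kap_calpha hne hlt] at hadj
    rcases edge_total hadj with he | he
    · exact he
    · exfalso
      have h1 := allLT_of_edge hlt he
      rw [kap_clam hne hlt, kap_clam hne hlt] at hAll
      obtain ⟨x, hx⟩ := lamx_nonempty hne hadj.1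
      obtain ⟨y, hy⟩ := lamx_nonempty hne hadj.2.1
      exact absurd ((hAll x hx y hy).trans (h1 y hy x hx)) (lt_irrefl x)
  · intro he
    have hadj := D.ornt.edge_adj _ _ he
    refine ⟨?_, ?_⟩
    · rw [kap_calpha hne hlt]; exact hadj
    · rw [kap_clam hne hlt, kap_clam hne hlt]
      exact allLT_of_edge hlt he

lemma MAO_ext {D₁ D₂ : MAO G} (h1 : D₁.α = D₂.α) (h2 : D₁.ornt.edge = D₂.ornt.edge) :
    D₁ = D₂ := by
  obtain ⟨a1, o1, m1⟩ := D₁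
  obtain ⟨a2, o2, m2⟩ := D₂
  dsimp at h1 h2
  subst h1
  obtain ⟨e1, x1, y1, z1⟩ := o1
  obtain ⟨e2, x2, y2, z2⟩ := o2
  dsimp at h2
  subst h2
  rfl

lemma kap_cMAO : cMAO G (kap D lam) (kap_proper hne hlt) = D :=
  MAO_ext (kap_calpha hne hlt) (kap_cedge hne hlt)

end Rev2
end Krom
namespace Krom

variable {V : Type*} {G : SimpleGraph V}

lemma monomatch_fwd {κ : V → Finset ℕ+} {m : ℕ+ →₀ ℕ} (hκ : IsProperSV G κ)
    (hm : MonoMatch κ m) :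
    MonoMatch (fun p : (cMAO G κ hκ).Verts => clam G κ p.1) m := by
  intro c
  rw [hm c]
  apply Nat.card_congr
  refine (Equiv.ofBijective
    (fun x : {w : (cMAO G κ hκ).Verts // c ∈ clam G κ w.1} =>
      (⟨x.1.1.1, (mem_clam.mp x.2).1⟩ : {v : V // c ∈ κ v})) ⟨?_, ?_⟩).symm
  · rintro ⟨⟨⟨v, i⟩, hvert⟩, hmem⟩ ⟨⟨⟨v', i'⟩, hvert'⟩, hmem'⟩ h
    simp only [Subtype.mk.injEq] at h
    subst h
    have h1 := (mem_clam.mp hmem).2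
    have h2 := (mem_clam.mp hmem').2
    dsimp at h1 h2
    have : i = i' := PNat.coe_injective (by rw [← h1, ← h2])
    subst this
    rfl
  · rintro ⟨v, hv⟩
    have hmem : c ∈ clam G κ (v, ⟨idx G κ v c, idx_pos hκ hv⟩) := mem_clam.mpr ⟨hv, rfl⟩
    exact ⟨⟨⟨(v, ⟨idx G κ v c, idx_pos hκ hv⟩), clanVert_of_mem_clam hκ hmem⟩, hmem⟩, rfl⟩

lemma monomatch_bwd {D : MAO G} {lam : D.Verts → Finset ℕ+} {m : ℕ+ →₀ ℕ}
    (hne : ∀ w, (lam w).Nonempty)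
    (hlt : ∀ p q : D.Verts, D.ornt.edge p.1 q.1 → FinsetAllLT (lam p) (lam q))
    (hm : MonoMatch lam m) : MonoMatch (kap D lam) m := by
  intro c
  rw [hm c]
  apply Nat.card_congr
  refine Equiv.ofBijective
    (fun x : {w : D.Verts // c ∈ lam w} =>
      (⟨x.1.1.1, mem_kap.mpr ⟨x.1.1.2, by rw [lamx, dif_pos x.1.2]; exact x.2⟩⟩ :
        {v : V // c ∈ kap D lam v})) ⟨?_, ?_⟩
  · rintro ⟨⟨⟨v, i⟩, hvert⟩, hmem⟩ ⟨⟨⟨v', i'⟩, hvert'⟩, hmem'⟩ h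
    simp only [Subtype.mk.injEq] at h
    subst h
    have h1 : c ∈ lamx D lam (v, i) := by rw [lamx, dif_pos hvert]; exact hmem
    have h2 : c ∈ lamx D lam (v, i') := by rw [lamx, dif_pos hvert']; exact hmem'
    have : i = i' := by
      by_contra hii
      exact Finset.disjoint_left.mp (lamx_disj hne hlt hii) h1 h2
    subst this
    rfl
  · rintro ⟨v, hv⟩
    obtain ⟨j, hj⟩ := mem_kap.mp hv
    have hvert : ClanVert D.α (v, j) := clanVert_of_mem_lamx hj
    have hj' : c ∈ lam ⟨(v, j), hvert⟩ := by rwa [lamx, dif_pos hvert] at hj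
    exact ⟨⟨⟨(v, j), hvert⟩, hj'⟩, rfl⟩

lemma kap_clam_inv {κ : V → Finset ℕ+} (hκ : IsProperSV G κ) :
    kap (cMAO G κ hκ) (fun p => clam G κ p.1) = κ := by
  funext v
  ext a
  rw [mem_kap]
  constructor
  · rintro ⟨i, hi⟩
    rw [lamx] at hi
    by_cases h : ClanVert (cMAO G κ hκ).α (v, i)
    · rw [dif_pos h] at hi
      exact (mem_clam.mp hi).1
    · rw [dif_neg h] at hi
      simp at hi
  · intro ha
    refine ⟨⟨idx G κ v a, idx_pos hκ ha⟩, ?_⟩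
    have hm : a ∈ clam G κ (v, ⟨idx G κ v a, idx_pos hκ ha⟩) := mem_clam.mpr ⟨ha, rfl⟩
    have hv : ClanVert (cMAO G κ hκ).α (v, ⟨idx G κ v a, idx_pos hκ ha⟩) :=
      clanVert_of_mem_clam hκ hm
    rw [lamx, dif_pos hv]
    exact hm

variable (G) in
def AT (m : ℕ+ →₀ ℕ) := {κ : V → Finset ℕ+ // IsProperSV G κ ∧ MonoMatch κ m}

variable (G) in
def BT (m : ℕ+ →₀ ℕ) (D : MAO G) := {lam : D.Verts → Finset ℕ+ //
    (∀ w, (lam w).Nonempty) ∧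
    (∀ u v : D.Verts, D.ornt.edge u.1 v.1 → FinsetAllLT (lam u) (lam v)) ∧
    MonoMatch lam m}

lemma coeff_gamma (m : ℕ+ →₀ ℕ) (D : MAO G) :
    MvPowerSeries.coeff m D.gamma = (Nat.card (BT G m D) : ℤ) := by
  rw [MvPowerSeries.coeff_apply]
  rfl

lemma coeff_kromatic (m : ℕ+ →₀ ℕ) :
    MvPowerSeries.coeff m (kromatic G) = (Nat.card (AT G m) : ℤ) := by
  rw [MvPowerSeries.coeff_apply]
  rfl

lemma AT_finite [Fintype V] (m : ℕ+ →₀ ℕ) : Finite (AT G m) := by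
  have hsub : ∀ (x : AT G m) (v : V) (i : ℕ+), i ∈ x.1 v → i ∈ m.support := by
    intro x v i hi
    rw [Finsupp.mem_support_iff, x.2.2 i]
    haveI : Nonempty {w : V // i ∈ x.1 w} := ⟨⟨v, hi⟩⟩
    exact Nat.card_pos.ne'
  refine Finite.of_injective
    (fun x : AT G m => (fun v => (⟨x.1 v, Finset.mem_powerset.mpr (fun i hi => hsub x v i hi)⟩ :
      {s : Finset ℕ+ // s ∈ m.support.powerset}))) ?_
  intro x y h
  apply Subtype.ext
  funext v
  exact congrArg Subtype.val (congrFun h v)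

variable (G) in
def fibEquiv (m : ℕ+ →₀ ℕ) (D : MAO G) :
    {x : AT G m // cMAO G x.1 x.2.1 = D} ≃ BT G m D where
  toFun x := ⟨fun p => clam G x.1.1 p.1, by
    obtain ⟨⟨κ0, hp, hm⟩, hfib⟩ := x
    subst hfib
    refine ⟨?_, ?_, ?_⟩
    · intro p
      exact clam_nonempty hp p.2
    · intro p q h
      exact h.2
    · exact monomatch_fwd hp hm⟩
  invFun y := ⟨⟨kap D y.1, kap_proper y.2.1 y.2.2.1,
      monomatch_bwd y.2.1 y.2.2.1 y.2.2.2⟩, kap_cMAO y.2.1 y.2.2.1⟩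
  left_inv x := by
    obtain ⟨⟨κ0, hp, hm⟩, hfib⟩ := x
    subst hfib
    apply Subtype.ext
    apply Subtype.ext
    exact kap_clam_inv hp
  right_inv y := by
    apply Subtype.ext
    funext p
    show clam G (kap D y.1) p.1 = y.1 p
    rw [kap_clam y.2.1 y.2.2.1 p.1, lamx, dif_pos p.2]
    rfl

end Krom

/-- `X̄_G = Σ_{D ∈ mAO(G)} Γ̄(D)`, coefficientwise. -/
theorem kromatic_eq_sum_gammabar {V : Type*} [Fintype V] (G : SimpleGraph V)
    (m : ℕ+ →₀ ℕ) :
    {D : MAO G | MvPowerSeries.coeff m D.gamma ≠ 0}.Finite ∧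
      MvPowerSeries.coeff m (kromatic G) =
        ∑ᶠ D : MAO G, MvPowerSeries.coeff m D.gamma := by
  classical
  haveI hFinA : Finite (Krom.AT G m) := Krom.AT_finite m
  set f : Krom.AT G m → MAO G := fun x => Krom.cMAO G x.1 x.2.1 with hf
  have hrangefin : (Set.range f).Finite := Set.finite_range f
  set s : Finset (MAO G) := hrangefin.toFinset with hs
  haveI hFinFib : ∀ D : MAO G, Finite {x : Krom.AT G m // f x = D} := fun D =>
    Subtype.finite
  have hcard : ∀ D : MAO G, Nat.card (Krom.BT G m D) =
      Nat.card {x : Krom.AT G m // f x = D} := fun D =>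
    Nat.card_congr (Krom.fibEquiv G m D).symm
  have hzero : ∀ D : MAO G, D ∉ s → Nat.card (Krom.BT G m D) = 0 := by
    intro D hD
    rw [hcard D, Nat.card_eq_zero]
    left
    refine ⟨fun x => hD ?_⟩
    rw [hs, Set.Finite.mem_toFinset]
    exact ⟨x.1, x.2⟩
  have hsubset : {D : MAO G | MvPowerSeries.coeff m D.gamma ≠ 0} ⊆ ↑s := by
    intro D hD
    simp only [Set.mem_setOf_eq] at hD
    rw [Krom.coeff_gamma] at hD
    by_contra hns
    rw [hzero D hns] at hD
    simp at hD
  refine ⟨(s.finite_toSet).subset hsubset, ?_⟩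
  haveI instF : ∀ D : MAO G, Fintype {x : Krom.AT G m // f x = D} := fun D =>
    Fintype.ofFinite _
  have e1 : Krom.AT G m ≃ Σ D : MAO G, {x : Krom.AT G m // f x = D} :=
    (Equiv.sigmaFiberEquiv f).symm
  have e2 : (Σ D : {D : MAO G // D ∈ s}, {x : Krom.AT G m // f x = D.1}) ≃
      Σ D : MAO G, {x : Krom.AT G m // f x = D} :=
    Equiv.sigmaSubtypeEquivOfSubset (fun D : MAO G => {x : Krom.AT G m // f x = D})
      (fun D => D ∈ s) (fun D x => by
      show D ∈ hrangefin.toFinset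
      rw [Set.Finite.mem_toFinset]
      exact ⟨x.1, x.2⟩)
  have hNat : Nat.card (Krom.AT G m) =
      ∑ D ∈ s, Nat.card {x : Krom.AT G m // f x = D} := by
    rw [Nat.card_congr (e1.trans e2.symm), Nat.card_eq_fintype_card, Fintype.card_sigma]
    rw [← Finset.sum_coe_sort s (fun D => Nat.card {x : Krom.AT G m // f x = D})]
    congr 1
    funext D
    rw [Nat.card_eq_fintype_card]
  have hR : ∑ᶠ D : MAO G, MvPowerSeries.coeff m D.gamma =
      ∑ D ∈ s, (Nat.card (Krom.BT G m D) : ℤ) := by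
    have hfun : (fun D : MAO G => MvPowerSeries.coeff m D.gamma) =
        fun D => (Nat.card (Krom.BT G m D) : ℤ) := funext (Krom.coeff_gamma m)
    rw [hfun]
    apply finsum_eq_sum_of_support_subset
    intro D hD
    rw [Function.mem_support] at hD
    by_contra hns
    rw [hzero D hns] at hD
    simp at hD
  rw [Krom.coeff_kromatic, hR, hNat]
  push_cast
  exact Finset.sum_congr rfl (fun D _ => by rw [hcard D])
end
end

section
/- For every positive integer n, the kromatic symmetric function of the complete graph K_n satisfies X̄_{K_n} = n! · Σ_{r ≥ n} {r−1 brace n−1} ē_r, as an identity of formal power series in x_1,x_2,... (the sum is well defined coefficientwise). -/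
/-!
STATEMENT 1: For every positive integer `n`,
`X̄_{K_n} = n! · Σ_{r ≥ n} {r−1 brace n−1} ē_r`, coefficientwise.
-/

open scoped Classical
noncomputable section

/-- The Stirling number of the second kind `{r brace n}`: the number of partitions of
an `r`-element set into `n` nonempty blocks. -/
def stirling2 (r n : ℕ) : ℕ :=
  Nat.card {P : Finpartition (Finset.univ : Finset (Fin r)) // P.parts.card = n}

/-- `ē_r := Σ_{k ≥ r} binom(k−1, r−1) e_k` (with `ē_0 := 1`), defined coefficientwise:
`e_k` has coefficient `1` exactly at the squarefree monomials with support of size `k`,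
so the coefficient of `ē_{r+1}` at a squarefree monomial with support of size `s ≥ r+1`
is `binom(s−1, r)`, and all other coefficients vanish. -/
def ebar : ℕ → MvPowerSeries ℕ+ ℤ
  | 0 => 1
  | r + 1 => fun m =>
      if (∀ i, m i ≤ 1) ∧ r + 1 ≤ m.support.card then
        (Nat.choose (m.support.card - 1) r : ℤ)
      else 0

/-! ### Auxiliary lemmas -/

open Finset

/-- The number of surjections from `Fin a` to `Fin b`. -/
def NSurj (a b : ℕ) : ℕ := Nat.card {f : Fin a → Fin b // Function.Surjective f}

lemma nsurj_invariance (α β : Type*) [Fintype α] [Fintype β] :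
    Nat.card {f : α → β // Function.Surjective f}
      = NSurj (Fintype.card α) (Fintype.card β) := by
  apply Nat.card_congr
  refine Equiv.subtypeEquiv
    (Equiv.arrowCongr (Fintype.equivFin α) (Fintype.equivFin β)) (fun f => ?_)
  simp [Equiv.arrowCongr]

lemma nsurj_eq_zero {j b : ℕ} (h : j < b) : NSurj j b = 0 := by
  have : IsEmpty {f : Fin j → Fin b // Function.Surjective f} := by
    refine ⟨fun x => ?_⟩
    have := Fintype.card_le_of_surjective x.1 x.2
    simp only [Fintype.card_fin] at this
    omega
  exact Nat.card_of_isEmpty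

lemma surj_card_eq_factorial_mul (α : Type*) [Fintype α] [DecidableEq α] (b : ℕ) :
    Nat.card {f : α → Fin b // Function.Surjective f}
      = b.factorial *
        Nat.card {P : Finpartition (Finset.univ : Finset α) // P.parts.card = b} := by
  set PT := {P : Finpartition (Finset.univ : Finset α) // P.parts.card = b} with hPT
  have memiff : ∀ (P : Finpartition (Finset.univ : Finset α)) (p : Finset α)
      (hp : p ∈ P.parts) (a : α), a ∈ p ↔ P.part a = p := by
    intro P p hp a
    constructor
    · exact fun h => P.part_eq_of_mem hp h
    · rintro rfl; exact P.mem_part (mem_univ a)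
  have Bsurj : ∀ (x : Σ P : PT, (↥(P.1.parts) ≃ Fin b)),
      Function.Surjective (fun a : α => x.2 ⟨x.1.1.part a, x.1.1.part_mem.mpr (mem_univ a)⟩) := by
    rintro ⟨⟨P, hP⟩, σ⟩ c
    obtain ⟨a, ha⟩ := P.nonempty_of_mem_parts (σ.symm c).2
    refine ⟨a, ?_⟩
    have h2 : (⟨P.part a, P.part_mem.mpr (mem_univ a)⟩ : ↥P.parts) = σ.symm c :=
      Subtype.ext ((memiff P _ (σ.symm c).2 a).mp ha)
    show σ ⟨P.part a, P.part_mem.mpr (mem_univ a)⟩ = c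
    rw [h2]
    simp
  set B : (Σ P : PT, (↥(P.1.parts) ≃ Fin b)) → {f : α → Fin b // Function.Surjective f} :=
    fun x => ⟨fun a => x.2 ⟨x.1.1.part a, x.1.1.part_mem.mpr (mem_univ a)⟩, Bsurj x⟩ with hB
  have fiber : ∀ (x : Σ P : PT, (↥(P.1.parts) ≃ Fin b)) (c : Fin b),
      ((x.2.symm c : Finset α)) = Finset.univ.filter (fun a => (B x).1 a = c) := by
    rintro ⟨⟨P, hP⟩, σ⟩ c
    ext a
    simp only [hB, mem_filter, mem_univ, true_and]
    rw [memiff P _ (σ.symm c).2 a]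
    constructor
    · intro h
      have : (⟨P.part a, P.part_mem.mpr (mem_univ a)⟩ : ↥P.parts) = σ.symm c := Subtype.ext h
      rw [this]; simp
    · intro h
      have : (⟨P.part a, P.part_mem.mpr (mem_univ a)⟩ : ↥P.parts) = σ.symm c := by
        rw [Equiv.eq_symm_apply]; exact h
      exact congrArg Subtype.val this
  have partsdesc : ∀ (x : Σ P : PT, (↥(P.1.parts) ≃ Fin b)) (p : Finset α),
      p ∈ x.1.1.parts ↔ ∃ c : Fin b, p = Finset.univ.filter (fun a => (B x).1 a = c) := by
    rintro ⟨⟨P, hP⟩, σ⟩ p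
    constructor
    · intro hp
      refine ⟨σ ⟨p, hp⟩, ?_⟩
      rw [← fiber ⟨⟨P, hP⟩, σ⟩ (σ ⟨p, hp⟩)]
      simp
    · rintro ⟨c, rfl⟩
      rw [← fiber ⟨⟨P, hP⟩, σ⟩ c]
      exact (σ.symm c).2
  have Binj : Function.Injective B := by
    rintro ⟨⟨P, hP⟩, σ⟩ ⟨⟨Q, hQ⟩, τ⟩ h
    have hPQ : P = Q := by
      apply Finpartition.ext
      ext p
      rw [partsdesc ⟨⟨P, hP⟩, σ⟩ p, partsdesc ⟨⟨Q, hQ⟩, τ⟩ p, h]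
    subst hPQ
    have hs : σ.symm = τ.symm := by
      apply Equiv.ext
      intro c
      apply Subtype.ext
      rw [fiber ⟨⟨P, hP⟩, σ⟩ c, fiber ⟨⟨P, hQ⟩, τ⟩ c, h]
    have hστ : σ = τ := by
      rw [← σ.symm_symm, ← τ.symm_symm, hs]
    subst hστ
    rfl
  have Bsur : Function.Surjective B := by
    rintro ⟨f, hf⟩
    set P : Finpartition (Finset.univ : Finset α) := Finpartition.ofSetoid (Setoid.ker f) with hPdef
    have hpart : ∀ a : α, P.part a = Finset.univ.filter (fun x => f x = f a) := by
      intro a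
      ext x
      rw [Finpartition.mem_part_ofSetoid_iff_rel]
      simp only [mem_filter, mem_univ, true_and]
      exact ⟨fun h => h.symm, fun h => h.symm⟩
    set F : Fin b → Finset α := fun c => Finset.univ.filter (fun x => f x = c) with hF
    have hFinj : Function.Injective F := by
      intro c c' hcc
      obtain ⟨a, ha⟩ := hf c
      have : a ∈ F c := by simp [hF, ha]
      rw [hcc] at this
      simp only [hF, mem_filter, mem_univ, true_and] at this
      rw [← ha, this]
    have hparts : P.parts = Finset.univ.image F := by
      ext p
      constructor
      · intro hp
        obtain ⟨a, ha⟩ := P.nonempty_of_mem_parts hp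
        have := P.part_eq_of_mem hp ha
        rw [hpart a] at this
        exact mem_image.mpr ⟨f a, mem_univ _, this⟩
      · rw [mem_image]
        rintro ⟨c, -, rfl⟩
        obtain ⟨a, rfl⟩ := hf c
        have : F (f a) = P.part a := (hpart a).symm
        rw [this]
        exact P.part_mem.mpr (mem_univ a)
    have hP : P.parts.card = b := by
      rw [hparts, Finset.card_image_of_injective _ hFinj, card_univ, Fintype.card_fin]
    have hg : Function.Bijective (fun c : Fin b => (⟨F c, by
        rw [hparts]; exact mem_image.mpr ⟨c, mem_univ _, rfl⟩⟩ : ↥P.parts)) := by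
      constructor
      · intro c c' h
        exact hFinj (congrArg Subtype.val h)
      · rintro ⟨p, hp⟩
        rw [hparts, mem_image] at hp
        obtain ⟨c, -, rfl⟩ := hp
        exact ⟨c, rfl⟩
    refine ⟨⟨⟨P, hP⟩, (Equiv.ofBijective _ hg).symm⟩, ?_⟩
    apply Subtype.ext
    funext a
    show (Equiv.ofBijective _ hg).symm ⟨P.part a, P.part_mem.mpr (mem_univ a)⟩ = f a
    rw [Equiv.symm_apply_eq, Equiv.ofBijective_apply]
    apply Subtype.ext
    show P.part a = F (f a)
    rw [hpart a, hF]
  have hcard := Nat.card_eq_of_bijective B ⟨Binj, Bsur⟩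
  rw [← hcard]
  have E3 : (Σ P : PT, (↥(P.1.parts) ≃ Fin b)) ≃ PT × (Fin b ≃ Fin b) := by
    refine (Equiv.sigmaCongrRight (fun P => ?_)).trans (Equiv.sigmaEquivProd PT (Fin b ≃ Fin b))
    refine Equiv.equivCongr (Fintype.equivFinOfCardEq ?_) (Equiv.refl (Fin b))
    rw [Fintype.card_coe, P.2]
  rw [Nat.card_congr E3, Nat.card_prod]
  have : Nat.card (Fin b ≃ Fin b) = b.factorial := by
    rw [Nat.card_eq_fintype_card, Fintype.card_equiv (Equiv.refl _), Fintype.card_fin]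
  rw [this, mul_comm]

lemma nsurj_stirling (r b : ℕ) : NSurj r b = b.factorial * stirling2 r b :=
  surj_card_eq_factorial_mul (Fin r) b

lemma nsurj_succ (a n : ℕ) :
    NSurj (a + 1) (n + 1)
      = ∑ j ∈ Finset.range (a + 1), Nat.choose a j * ((n + 1) * NSurj j n) := by
  have h0 : NSurj (a+1) (n+1)
      = Nat.card {f : Option (Fin a) → Fin (n+1) // Function.Surjective f} := by
    rw [nsurj_invariance]
    simp
  set Tot := Σ c : Fin (n+1), Σ T : Finset (Fin a),
    {g : ↥T → {x : Fin (n+1) // x ≠ c} // Function.Surjective g} with hTot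
  have Bsurj : ∀ (x : Tot), Function.Surjective (fun o : Option (Fin a) =>
      o.elim x.1 (fun v => if h : v ∈ x.2.1 then (x.2.2.1 ⟨v, h⟩).1 else x.1)) := by
    rintro ⟨c, T, g, hg⟩ y
    by_cases hy : y = c
    · exact ⟨none, hy.symm⟩
    · obtain ⟨t, ht⟩ := hg ⟨y, hy⟩
      refine ⟨some t.1, ?_⟩
      simp only [Option.elim, t.2, dif_pos, Subtype.coe_eta]
      rw [ht]
  set B : Tot → {f : Option (Fin a) → Fin (n+1) // Function.Surjective f} :=
    fun x => ⟨fun o => o.elim x.1 (fun v => if h : v ∈ x.2.1 then (x.2.2.1 ⟨v, h⟩).1 else x.1),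
      Bsurj x⟩ with hBdef
  have Binj : Function.Injective B := by
    rintro ⟨c, T, g, hg⟩ ⟨c', T', g', hg'⟩ h
    rw [Subtype.ext_iff] at h
    have hc : c = c' := congrFun h none
    subst hc
    have hmem : ∀ (T : Finset (Fin a))
        (g : {g : ↥T → {x : Fin (n+1) // x ≠ c} // Function.Surjective g}) (v : Fin a),
        (v ∈ T ↔ (B ⟨c, T, g⟩).1 (some v) ≠ c) := by
      rintro T ⟨g, hg⟩ v
      constructor
      · intro hv
        simp only [hBdef, Option.elim, dif_pos hv]
        exact (g ⟨v, hv⟩).2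
      · intro hv
        by_contra hvT
        apply hv
        simp only [hBdef, Option.elim, dif_neg hvT]
    have hT : T = T' := by
      ext v
      rw [hmem T ⟨g, hg⟩ v, hmem T' ⟨g', hg'⟩ v, h]
    subst hT
    have hgg : g = g' := by
      funext t
      apply Subtype.ext
      have h1 : (g t).1 = (B ⟨c, T, ⟨g, hg⟩⟩).1 (some t.1) := by
        simp only [hBdef, Option.elim, dif_pos t.2, Subtype.coe_eta]
      have h2 : (g' t).1 = (B ⟨c, T, ⟨g', hg'⟩⟩).1 (some t.1) := by
        simp only [hBdef, Option.elim, dif_pos t.2, Subtype.coe_eta]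
      rw [h1, h2, h]
    subst hgg
    rfl
  have Bsur : Function.Surjective B := by
    rintro ⟨f, hf⟩
    set T : Finset (Fin a) := Finset.univ.filter (fun v => f (some v) ≠ f none) with hTdef
    have hgsurj : Function.Surjective (fun t : ↥T =>
        (⟨f (some t.1), (mem_filter.mp t.2).2⟩ : {x : Fin (n+1) // x ≠ f none})) := by
      rintro ⟨y, hy⟩
      obtain ⟨o, ho⟩ := hf y
      match o with
      | none => exact absurd ho.symm hy
      | some v =>
        have hvT : v ∈ T := by
          rw [hTdef, mem_filter]
          exact ⟨mem_univ v, by rw [ho]; exact hy⟩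
        exact ⟨⟨v, hvT⟩, Subtype.ext ho⟩
    refine ⟨⟨f none, T, ⟨_, hgsurj⟩⟩, ?_⟩
    apply Subtype.ext
    funext o
    match o with
    | none => rfl
    | some v =>
      show (if h : v ∈ T then _ else f none) = f (some v)
      by_cases hv : v ∈ T
      · rw [dif_pos hv]
      · rw [dif_neg hv]
        rw [hTdef, mem_filter, not_and, not_not] at hv
        exact (hv (mem_univ v)).symm
  have hcard := Nat.card_eq_of_bijective B ⟨Binj, Bsur⟩
  rw [h0, ← hcard]
  have hfib : ∀ (c : Fin (n+1)) (T : Finset (Fin a)),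
      Nat.card {g : ↥T → {x : Fin (n+1) // x ≠ c} // Function.Surjective g}
        = NSurj T.card n := by
    intro c T
    rw [nsurj_invariance]
    congr 1
    · exact Fintype.card_coe T
    · rw [Fintype.card_subtype_compl, Fintype.card_fin, Fintype.card_subtype_eq]
      omega
  rw [Nat.card_eq_fintype_card, Fintype.card_sigma]
  have : ∀ c : Fin (n+1), Fintype.card (Σ T : Finset (Fin a),
      {g : ↥T → {x : Fin (n+1) // x ≠ c} // Function.Surjective g})
        = ∑ T : Finset (Fin a), NSurj T.card n := by
    intro c
    rw [Fintype.card_sigma]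
    refine Finset.sum_congr rfl (fun T _ => ?_)
    rw [← Nat.card_eq_fintype_card, hfib]
  rw [Finset.sum_congr rfl (fun c _ => this c), Finset.sum_const, Finset.card_univ,
    Fintype.card_fin, smul_eq_mul]
  have hps : ∑ T : Finset (Fin a), NSurj T.card n
      = ∑ j ∈ Finset.range (a + 1), Nat.choose a j * NSurj j n := by
    rw [← Finset.powerset_univ]
    rw [Finset.sum_powerset_apply_card (fun j => NSurj j n)]
    simp [Finset.card_univ]
  rw [hps, Finset.mul_sum]
  refine Finset.sum_congr rfl (fun j _ => ?_)
  ring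

lemma main_nat (n s : ℕ) (hn : 0 < n) :
    NSurj s n = n.factorial *
      ∑ r ∈ Finset.range (s + 1),
        (if n ≤ r then stirling2 (r - 1) (n - 1) * Nat.choose (s - 1) (r - 1) else 0) := by
  obtain ⟨k, rfl⟩ : ∃ k, n = k + 1 := ⟨n - 1, by omega⟩
  cases s with
  | zero =>
    rw [nsurj_eq_zero (by omega)]
    simp
  | succ a =>
    rw [nsurj_succ a k]
    conv_rhs => rw [Finset.sum_range_succ']
    have h0 : (if k + 1 ≤ 0 then stirling2 (0 - 1) (k + 1 - 1) * Nat.choose (a + 1 - 1) (0 - 1)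
        else 0) = 0 := by simp
    rw [h0, add_zero, Finset.mul_sum]
    refine Finset.sum_congr rfl (fun j _ => ?_)
    by_cases hkj : k ≤ j
    · rw [if_pos (by omega)]
      rw [nsurj_stirling j k, Nat.factorial_succ]
      simp only [Nat.add_sub_cancel]
      ring
    · rw [if_neg (by omega), nsurj_eq_zero (by omega)]
      ring

lemma card_colorings (n : ℕ) (m : ℕ+ →₀ ℕ) (hsq : ∀ i, m i ≤ 1) :
    Nat.card {κ : Fin n → Finset ℕ+ //
        IsProperSV (⊤ : SimpleGraph (Fin n)) κ ∧ MonoMatch κ m}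
      = NSurj m.support.card n := by
  set κf : (↥m.support → Fin n) → Fin n → Finset ℕ+ :=
    fun f w => (m.support.attach.filter (fun t => f t = w)).image Subtype.val with hκf
  have hmemκ : ∀ (f : ↥m.support → Fin n) (w : Fin n) (i : ℕ+),
      i ∈ κf f w ↔ ∃ h : i ∈ m.support, f ⟨i, h⟩ = w := by
    intro f w i
    constructor
    · intro h
      obtain ⟨t, ht, rfl⟩ := Finset.mem_image.mp h
      have h2 := (Finset.mem_filter.mp ht).2
      exact ⟨t.2, by rwa [Subtype.coe_eta]⟩
    · rintro ⟨h, hf⟩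
      exact Finset.mem_image.mpr ⟨⟨i, h⟩,
        Finset.mem_filter.mpr ⟨Finset.mem_attach _ _, hf⟩, rfl⟩
  have hBprop : ∀ f : {f : ↥m.support → Fin n // Function.Surjective f},
      IsProperSV (⊤ : SimpleGraph (Fin n)) (κf f.1) ∧ MonoMatch (κf f.1) m := by
    rintro ⟨f, hf⟩
    refine ⟨⟨?_, ?_⟩, ?_⟩
    · intro w
      obtain ⟨t, ht⟩ := hf w
      exact ⟨t.1, (hmemκ f w t.1).mpr ⟨t.2, by rwa [Subtype.coe_eta]⟩⟩
    · intro u v hadj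
      rw [Finset.disjoint_left]
      intro i hiu hiv
      obtain ⟨h1, e1⟩ := (hmemκ f u i).mp hiu
      obtain ⟨h2, e2⟩ := (hmemκ f v i).mp hiv
      exact hadj.ne (by rw [← e1, ← e2])
    · intro i
      by_cases hi : i ∈ m.support
      · have hm1 : m i = 1 :=
          le_antisymm (hsq i) (Nat.one_le_iff_ne_zero.mpr (Finsupp.mem_support_iff.mp hi))
        rw [hm1]
        symm
        rw [Nat.card_eq_one_iff_unique]
        constructor
        · refine ⟨fun x y => ?_⟩
          obtain ⟨hx, ex⟩ := (hmemκ f x.1 i).mp x.2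
          obtain ⟨hy, ey⟩ := (hmemκ f y.1 i).mp y.2
          exact Subtype.ext (by rw [← ex, ← ey])
        · exact ⟨f ⟨i, hi⟩, (hmemκ f _ i).mpr ⟨hi, rfl⟩⟩
      · have hm0 : m i = 0 := Finsupp.notMem_support_iff.mp hi
        rw [hm0]
        have : IsEmpty {w : Fin n // i ∈ κf f w} := by
          refine ⟨fun x => ?_⟩
          obtain ⟨h, -⟩ := (hmemκ f x.1 i).mp x.2
          exact hi h
        exact Nat.card_of_isEmpty.symm
  set B : {f : ↥m.support → Fin n // Function.Surjective f} →
      {κ : Fin n → Finset ℕ+ // IsProperSV (⊤ : SimpleGraph (Fin n)) κ ∧ MonoMatch κ m} :=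
    fun f => ⟨κf f.1, hBprop f⟩ with hBd
  have Binj : Function.Injective B := by
    rintro ⟨f, hf⟩ ⟨g, hg⟩ h
    have hval : κf f = κf g := congrArg Subtype.val h
    apply Subtype.ext
    funext t
    have h1 : t.1 ∈ κf f (f t) := (hmemκ f (f t) t.1).mpr ⟨t.2, by rw [Subtype.coe_eta]⟩
    rw [hval] at h1
    obtain ⟨h2, e2⟩ := (hmemκ g (f t) t.1).mp h1
    show f t = g t
    rw [← e2]
  have Bsur : Function.Surjective B := by
    rintro ⟨κ, ⟨hne, hdis⟩, hmm⟩
    have key : ∀ (i : ℕ+) (w : Fin n), i ∈ κ w → i ∈ m.support := by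
      intro i w hiw
      rw [Finsupp.mem_support_iff, hmm i]
      haveI : Nonempty {w' : Fin n // i ∈ κ w'} := ⟨⟨w, hiw⟩⟩
      have := Nat.card_pos (α := {w' : Fin n // i ∈ κ w'})
      omega
    have uniq : ∀ i : ℕ+, ∀ x y : {w' : Fin n // i ∈ κ w'}, x = y := by
      intro i x y
      haveI : Nonempty {w' : Fin n // i ∈ κ w'} := ⟨x⟩
      have hpos := Nat.card_pos (α := {w' : Fin n // i ∈ κ w'})
      have hle : Nat.card {w' : Fin n // i ∈ κ w'} ≤ 1 := by rw [← hmm i]; exact hsq i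
      have h1 : Nat.card {w' : Fin n // i ∈ κ w'} = 1 := by omega
      obtain ⟨hs, -⟩ := Nat.card_eq_one_iff_unique.mp h1
      exact hs.allEq x y
    have hnonempty : ∀ t : ↥m.support, Nonempty {w : Fin n // t.1 ∈ κ w} := by
      intro t
      have hpos : 0 < Nat.card {w : Fin n // t.1 ∈ κ w} := by
        rw [← hmm]
        exact Nat.pos_of_ne_zero (Finsupp.mem_support_iff.mp t.2)
      exact (Nat.card_pos_iff.mp hpos).1
    set f : ↥m.support → Fin n := fun t => (hnonempty t).some.1 with hfd
    have hfspec : ∀ t : ↥m.support, t.1 ∈ κ (f t) := fun t => (hnonempty t).some.2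
    have hfuniq : ∀ (i : ℕ+) (hi : i ∈ m.support) (w : Fin n), i ∈ κ w → f ⟨i, hi⟩ = w := by
      intro i hi w hiw
      exact congrArg Subtype.val (uniq i ⟨f ⟨i, hi⟩, hfspec ⟨i, hi⟩⟩ ⟨w, hiw⟩)
    have hfsurj : Function.Surjective f := by
      intro w
      obtain ⟨i, hiw⟩ := hne w
      have hi := key i w hiw
      exact ⟨⟨i, hi⟩, hfuniq i hi w hiw⟩
    refine ⟨⟨f, hfsurj⟩, ?_⟩
    apply Subtype.ext
    show κf f = κ
    funext w
    ext i
    rw [hmemκ f w i]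
    constructor
    · rintro ⟨h, e⟩
      have := hfspec ⟨i, h⟩
      rwa [e] at this
    · intro hiw
      exact ⟨key i w hiw, hfuniq i (key i w hiw) w hiw⟩
  have := Nat.card_eq_of_bijective B ⟨Binj, Bsur⟩
  rw [← this, nsurj_invariance, Fintype.card_coe, Fintype.card_fin]

lemma isEmpty_colorings_of_not_sq (n : ℕ) (m : ℕ+ →₀ ℕ) (i : ℕ+) (hi : 1 < m i) :
    IsEmpty {κ : Fin n → Finset ℕ+ //
        IsProperSV (⊤ : SimpleGraph (Fin n)) κ ∧ MonoMatch κ m} := by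
  refine ⟨fun x => ?_⟩
  obtain ⟨κ, ⟨hne, hdis⟩, hmm⟩ := x
  have h1 : 1 < Nat.card {w : Fin n // i ∈ κ w} := by rw [← hmm i]; exact hi
  rw [Nat.card_eq_fintype_card, Fintype.one_lt_card_iff_nontrivial] at h1
  obtain ⟨⟨u, hu⟩, ⟨v, hv⟩, huv⟩ := h1
  have hne' : u ≠ v := fun h => huv (Subtype.ext h)
  have hd := hdis ((SimpleGraph.top_adj u v).mpr hne')
  exact (Finset.disjoint_left.mp hd hu) hv

/-- `X̄_{K_n} = n! · Σ_{r ≥ n} {r−1 brace n−1} ē_r`, coefficientwise. -/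
theorem kromatic_completeGraph (n : ℕ) (hn : 0 < n) (m : ℕ+ →₀ ℕ) :
    MvPowerSeries.coeff m (kromatic (⊤ : SimpleGraph (Fin n))) =
      (Nat.factorial n : ℤ) *
        ∑ᶠ (r : ℕ) (_ : n ≤ r),
          (stirling2 (r - 1) (n - 1) : ℤ) * MvPowerSeries.coeff m (ebar r) := by
  have hk : MvPowerSeries.coeff m (kromatic (⊤ : SimpleGraph (Fin n)))
      = (Nat.card {κ : Fin n → Finset ℕ+ //
          IsProperSV (⊤ : SimpleGraph (Fin n)) κ ∧ MonoMatch κ m} : ℤ) := rfl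
  have hebar : ∀ t : ℕ, MvPowerSeries.coeff m (ebar (t + 1))
      = if (∀ i, m i ≤ 1) ∧ t + 1 ≤ m.support.card
        then (Nat.choose (m.support.card - 1) t : ℤ) else 0 := fun t => rfl
  by_cases hsq : ∀ i : ℕ+, m i ≤ 1
  · set s := m.support.card with hs
    rw [hk, card_colorings n m hsq]
    have hfin : ∑ᶠ (r : ℕ) (_ : n ≤ r),
        (stirling2 (r - 1) (n - 1) : ℤ) * MvPowerSeries.coeff m (ebar r)
        = ∑ r ∈ Finset.range (s + 1),
            (if n ≤ r then (stirling2 (r - 1) (n - 1) : ℤ) *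
              MvPowerSeries.coeff m (ebar r) else 0) := by
      rw [finsum_congr (fun r => finsum_eq_if (p := n ≤ r))]
      apply finsum_eq_finset_sum_of_support_subset
      intro r hr
      rw [Function.mem_support] at hr
      rw [Finset.coe_range, Set.mem_Iio]
      by_contra hrs
      push_neg at hrs
      apply hr
      by_cases hnr : n ≤ r
      · rw [if_pos hnr]
        obtain ⟨t, rfl⟩ : ∃ t, r = t + 1 := ⟨r - 1, by omega⟩
        rw [hebar t, if_neg (by push_neg; intro; omega), mul_zero]
      · rw [if_neg hnr]
    rw [hfin]
    have hsum : ∑ r ∈ Finset.range (s + 1),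
        (if n ≤ r then (stirling2 (r - 1) (n - 1) : ℤ) *
          MvPowerSeries.coeff m (ebar r) else 0)
        = ∑ r ∈ Finset.range (s + 1),
            ((if n ≤ r then stirling2 (r - 1) (n - 1) * Nat.choose (s - 1) (r - 1) else 0 : ℕ) : ℤ) := by
      refine Finset.sum_congr rfl (fun r hr => ?_)
      rw [Finset.mem_range] at hr
      by_cases hnr : n ≤ r
      · rw [if_pos hnr, if_pos hnr]
        obtain ⟨t, rfl⟩ : ∃ t, r = t + 1 := ⟨r - 1, by omega⟩
        rw [hebar t, if_pos ⟨hsq, by omega⟩]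
        push_cast
        simp only [Nat.add_sub_cancel]
      · rw [if_neg hnr, if_neg hnr, Nat.cast_zero]
    rw [hsum, ← Nat.cast_sum, ← Nat.cast_mul, main_nat n s hn]
  · push_neg at hsq
    obtain ⟨i, hi⟩ := hsq
    haveI := isEmpty_colorings_of_not_sq n m i hi
    rw [hk, Nat.card_of_isEmpty]
    have hz : ∀ r : ℕ, (∑ᶠ (_ : n ≤ r),
        (stirling2 (r - 1) (n - 1) : ℤ) * MvPowerSeries.coeff m (ebar r)) = 0 := by
      intro r
      rw [finsum_eq_if]
      split
      · next hnr =>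
        obtain ⟨t, rfl⟩ : ∃ t, r = t + 1 := ⟨r - 1, by omega⟩
        rw [hebar t, if_neg (by push_neg; intro h; exact absurd (h i) (by omega))]
        ring
      · rfl
    rw [finsum_congr hz, finsum_zero, mul_zero]
    simp
end
end

section
/- Let G be a finite simple graph, α: V(G) → ℙ a map, and D an acyclic orientation of the α-clan graph Cl_α(G). Then D is an acyclic multi-orientation of G if and only if for every v ∈ V(G) both of the following hold: (a) whenever i,j ∈ {1,…,α(v)} with i > j, the pair (v,i) → (v,j) is a directed edge of D; and (b) for every 1 ≤ i ≤ α(v)−1 there exists a directed path in D from (v,i+1) to (v,i) that uses no edge of the form (v,j) → (v,k). -/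
/-!
STATEMENT 3: Characterization of acyclic multi-orientations: an acyclic orientation `D`
of the clan graph `Cl_α(G)` is an acyclic multi-orientation of `G` if and only if for
every vertex `v` of `G`:
(a) `(v,i) → (v,j)` is a directed edge of `D` whenever `1 ≤ j < i ≤ α v`; and
(b) for every `1 ≤ i ≤ α v − 1` there is a directed path in `D` from `(v,i+1)` to
    `(v,i)` using no edge of the form `(v,j) → (v,k)`.
-/

open scoped Classical
noncomputable section

/-- Auxiliary: a chain from `a` to `b` gives `ReflTransGen r a b`. -/
lemma chain'_reflTransGen_aux {W : Type*} {r : W → W → Prop} :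
    ∀ (l : List W) (a b : W), l.Chain' r → l.head? = some a → l.getLast? = some b →
      Relation.ReflTransGen r a b
  | [], a, b, _, ha, _ => by simp at ha
  | [x], a, b, _, ha, hb => by
      simp at ha hb; subst ha; subst hb; exact Relation.ReflTransGen.refl
  | x :: y :: t, a, b, hc, ha, hb => by
      have hax : a = x := by simpa using ha.symm
      rw [List.Chain', List.isChain_cons_cons] at hc
      have hrest := chain'_reflTransGen_aux (y :: t) y b hc.2 rfl
        (by rw [← hb, List.getLast?_cons_cons])
      subst hax
      exact hrest.head hc.1

/-- Auxiliary: from a chain from `a` to `b` that is not an `s`-chain, extract a bad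
edge together with reachability information. -/
lemma extract_bad_aux {W : Type*} (r s : W → W → Prop) :
    ∀ (l : List W) (a b : W), l.Chain' r → l.head? = some a → l.getLast? = some b →
      ¬ l.Chain' s →
      ∃ x y, r x y ∧ ¬ s x y ∧ Relation.ReflTransGen r a x ∧ Relation.ReflTransGen r y b ∧
        (l = [x, y] ∨ (∃ w, r w x ∧ Relation.ReflTransGen r a w) ∨
          (∃ z, r y z ∧ Relation.ReflTransGen r z b))
  | [], a, b, _, _, _, hns => absurd List.isChain_nil hns
  | [x], a, b, _, _, _, hns => absurd (List.isChain_singleton x) hns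
  | x :: y :: t, a, b, hc, ha, hb, hns => by
      have hax : a = x := by simpa using ha.symm
      subst hax
      rw [List.Chain', List.isChain_cons_cons] at hc
      have hb' : (y :: t).getLast? = some b := by rw [← hb, List.getLast?_cons_cons]
      by_cases hs : s a y
      · have hns' : ¬ (y :: t).Chain' s := fun h => hns (List.isChain_cons_cons.2 ⟨hs, h⟩)
        obtain ⟨x', y', hr, hnsxy, hyx', hy'b, hcase⟩ :=
          extract_bad_aux r s (y :: t) y b hc.2 rfl hb' hns'
        refine ⟨x', y', hr, hnsxy, hyx'.head hc.1, hy'b, ?_⟩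
        rcases hcase with h | h | h
        · have hy : y = x' := by
            have := congrArg List.head? h; simpa using this
          subst hy
          exact Or.inr (Or.inl ⟨a, hc.1, Relation.ReflTransGen.refl⟩)
        · obtain ⟨w, hw, hyw⟩ := h
          exact Or.inr (Or.inl ⟨w, hw, hyw.head hc.1⟩)
        · exact Or.inr (Or.inr h)
      · refine ⟨a, y, hc.1, hs, Relation.ReflTransGen.refl,
          chain'_reflTransGen_aux (y :: t) y b hc.2 rfl hb', ?_⟩
        cases t with
        | nil => exact Or.inl rfl
        | cons z t' =>
            rw [List.isChain_cons_cons] at hc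
            exact Or.inr (Or.inr ⟨z, hc.2.1, chain'_reflTransGen_aux (z :: t') z b hc.2.2 rfl
              (by rw [← hb', List.getLast?_cons_cons])⟩)

/-- Auxiliary: part (a) of the characterization follows from the multi-orientation
property. -/
lemma multi_down {V : Type*} {G : SimpleGraph V} {α : V → ℕ+} (D : ClanOrientation G α)
    (hM : IsMultiOrientation D) (v : V) :
    ∀ i j : ℕ+, i ≤ α v → j ≤ α v → j < i → D.edge (v, i) (v, j) := by
  have step : ∀ k : ℕ+, k + 1 ≤ α v → Relation.TransGen D.edge (v, k + 1) (v, k) := by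
    intro k hk
    obtain ⟨p₁, p₂, _, hp₁, _⟩ := hM v k hk
    have h := chain'_reflTransGen_aux p₁ _ _ hp₁.1 hp₁.2.1 hp₁.2.2
    rcases Relation.reflTransGen_iff_eq_or_transGen.1 h with h | h
    · exfalso
      have : (k : ℕ) = (k + 1 : ℕ+) := by
        have := congrArg Prod.snd h
        exact_mod_cast congrArg (PNat.val) this
      simp [PNat.add_coe] at this
    · exact h
  have down : ∀ n : ℕ, ∀ j : ℕ+, j + n.succPNat ≤ α v →
      Relation.TransGen D.edge (v, j + n.succPNat) (v, j) := by
    intro n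
    induction n with
    | zero =>
        intro j hj
        have h1 : j + (Nat.succPNat 0) = j + 1 := rfl
        rw [h1] at hj ⊢
        exact step j hj
    | succ m ih =>
        intro j hj
        have h1 : j + m.succPNat + 1 = j + (m + 1).succPNat := by
          apply PNat.coe_inj.1
          simp [PNat.add_coe, Nat.succPNat_coe]
          ring
        have hle : j + m.succPNat + 1 ≤ α v := by rw [h1]; exact hj
        have t1 := step (j + m.succPNat) hle
        have t2 := ih j (le_trans (le_of_lt (PNat.lt_add_right _ _)) hle)
        rw [h1] at t1
        exact t1.trans t2
  intro i j hi hj hij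
  obtain ⟨n, hn⟩ : ∃ n : ℕ, i = j + n.succPNat := by
    refine ⟨(i : ℕ) - (j : ℕ) - 1, PNat.coe_inj.1 ?_⟩
    have : (j : ℕ) < i := (PNat.coe_lt_coe _ _).2 hij
    simp [PNat.add_coe, Nat.succPNat_coe]
    omega
  have htg : Relation.TransGen D.edge (v, i) (v, j) := by rw [hn]; exact down _ j (hn ▸ hi)
  by_contra hne
  have adj : ClanAdj G α (v, j) (v, i) := ⟨hj, hi, Or.inr ⟨rfl, ne_of_lt hij⟩⟩
  have hedge : D.edge (v, j) (v, i) := (D.oriented _ _ adj).2 hne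
  exact D.acyclic (v, i) (htg.tail hedge)

/-- Characterization of acyclic multi-orientations. -/
theorem isMultiOrientation_iff {V : Type*} (G : SimpleGraph V) (α : V → ℕ+)
    (D : ClanOrientation G α) :
    IsMultiOrientation D ↔
      ∀ v : V,
        (∀ i j : ℕ+, i ≤ α v → j ≤ α v → j < i → D.edge (v, i) (v, j)) ∧
        (∀ i : ℕ+, i + 1 ≤ α v →
          ∃ p : List (V × ℕ+), IsDiPath D.edge p (v, i + 1) (v, i) ∧
            p.Chain' (fun x y => ¬ (x.1 = v ∧ y.1 = v))) := by
  constructor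
  · intro hM v
    have ha := multi_down D hM v
    refine ⟨ha, ?_⟩
    intro i hi
    have hile : i ≤ α v := le_trans (le_of_lt (PNat.lt_add_right _ _)) hi
    obtain ⟨p₁, p₂, hne, hp₁, hp₂⟩ := hM v i hi
    -- pick a path that is not the direct edge path
    obtain ⟨p, hp, hpne⟩ : ∃ p, IsDiPath D.edge p (v, i + 1) (v, i) ∧
        p ≠ [(v, i + 1), (v, i)] := by
      by_cases h : p₁ = [(v, i + 1), (v, i)]
      · exact ⟨p₂, hp₂, fun hh => hne (h.trans hh.symm)⟩
      · exact ⟨p₁, hp₁, h⟩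
    refine ⟨p, hp, ?_⟩
    by_contra hnc
    obtain ⟨x, y, hr, hnsxy, hax, hyb, hcase⟩ :=
      extract_bad_aux D.edge (fun x y => ¬ (x.1 = v ∧ y.1 = v)) p _ _ hp.1 hp.2.1 hp.2.2 hnc
    rw [not_not] at hnsxy
    obtain ⟨hxv, hyv⟩ := hnsxy
    have hxe : x = (v, x.2) := by rw [← hxv]
    have hye : y = (v, y.2) := by rw [← hyv]
    obtain ⟨hcx, hcy, hadj⟩ := D.edge_adj x y hr
    have hx2 : x.2 ≤ α v := by rw [ClanVert, hxv] at hcx; exact hcx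
    have hy2 : y.2 ≤ α v := by rw [ClanVert, hyv] at hcy; exact hcy
    have hne2 : x.2 ≠ y.2 := by
      rcases hadj with h | h
      · rw [hxv, hyv] at h; exact absurd h (G.irrefl)
      · exact h.2
    -- direction: y.2 < x.2
    have hlt : y.2 < x.2 := by
      rcases lt_trichotomy y.2 x.2 with h | h | h
      · exact h
      · exact absurd h.symm hne2
      · exfalso
        have := ha y.2 x.2 hy2 hx2 h
        rw [← hxe, ← hye] at this
        exact ((D.oriented x y (D.edge_adj x y hr)).1 hr) this
    have noCyc := D.acyclic
    rcases lt_trichotomy x.2 (i + 1) with hxi | hxi | hxi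
    · -- x.2 ≤ i, so y.2 < i, edge (v, i) y, cycle at y
      have hylt : y.2 < i := by
        have h1 : (x.2 : ℕ) < (i : ℕ) + 1 := by
          have := (PNat.coe_lt_coe _ _).2 hxi; simpa [PNat.add_coe] using this
        have h2 : (y.2 : ℕ) < (x.2 : ℕ) := (PNat.coe_lt_coe _ _).2 hlt
        exact (PNat.coe_lt_coe _ _).1 (by omega)
      have hedge : D.edge (v, i) (v, y.2) := ha i y.2 hile hy2 hylt
      rw [← hye] at hedge
      exact noCyc y (Relation.TransGen.tail' hyb hedge)
    · -- x = (v, i+1); case on y.2 vs i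
      rcases lt_trichotomy y.2 i with hyi | hyi | hyi
      · have hedge : D.edge (v, i) (v, y.2) := ha i y.2 hile hy2 hyi
        rw [← hye] at hedge
        exact noCyc y (Relation.TransGen.tail' hyb hedge)
      · -- x = (v,i+1), y = (v,i)
        have hxeq : x = (v, i + 1) := by rw [hxe, hxi]
        have hyeq : y = (v, i) := by rw [hye, hyi]
        rcases hcase with h | h | h
        · exact hpne (by rw [h, hxeq, hyeq])
        · obtain ⟨w, hw, haw⟩ := h
          rw [hxeq] at hw
          exact noCyc (v, i + 1) (Relation.TransGen.tail' haw hw)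
        · obtain ⟨z, hz, hzb⟩ := h
          rw [hyeq] at hz
          exact noCyc (v, i) (Relation.TransGen.head' hz hzb)
      · exfalso
        have h1 : (y.2 : ℕ) < (x.2 : ℕ) := (PNat.coe_lt_coe _ _).2 hlt
        have h2 : (x.2 : ℕ) = (i : ℕ) + 1 := by
          have := congrArg PNat.val hxi; simpa [PNat.add_coe] using this
        have h3 : (i : ℕ) < (y.2 : ℕ) := (PNat.coe_lt_coe _ _).2 hyi
        omega
    · -- x.2 > i+1: edge x (v, i+1), cycle at (v, i+1)
      have hedge : D.edge (v, x.2) (v, i + 1) := ha x.2 (i + 1) hx2 hi hxi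
      rw [← hxe] at hedge
      exact noCyc (v, i + 1) (Relation.TransGen.tail' hax hedge)
  · intro h v i hi
    obtain ⟨ha, hb⟩ := h v
    obtain ⟨p, hp, hpc⟩ := hb i hi
    have hile : i ≤ α v := le_trans (le_of_lt (PNat.lt_add_right _ _)) hi
    have hedge : D.edge (v, i + 1) (v, i) := ha (i + 1) i hi hile (PNat.lt_add_right _ _)
    refine ⟨[(v, i + 1), (v, i)], p, ?_, ⟨List.isChain_pair.2 hedge, by simp, by simp⟩, hp⟩
    intro hh
    rw [← hh] at hpc
    have := List.isChain_pair.1 hpc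
    exact this ⟨rfl, rfl⟩
end
end

section
/- Let (G,ω) be a weighted graph. Then X̄_{(G,ω)}(x,y) = Σ_{S∪T=V(G)} X̄_{(G|_S, ω|_S)}(x) · X̄_{(G|_T, ω|_T)}(y), where the sum is over all pairs of (not necessarily disjoint) subsets S, T ⊆ V(G) with S ∪ T = V(G), and G|_S denotes the induced subgraph of G on S. -/
/-!
STATEMENT 5: For a weighted graph `(G,ω)`,
`X̄_{(G,ω)}(x,y) = Σ_{S∪T=V(G)} X̄_{(G|_S,ω|_S)}(x) · X̄_{(G|_T,ω|_T)}(y)`,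
the sum being over all pairs of (not necessarily disjoint) subsets `S, T ⊆ V(G)` with
`S ∪ T = V(G)`.  Here `f(x,y)` is obtained from the symmetric series `f` by renaming
the variables along any bijection `ℕ+ ≃ ℕ+ ⊕ ℕ+` (the result being independent of the
bijection, the identity is asserted for every such bijection).
-/

open scoped Classical
noncomputable section

/-- The kromatic symmetric function of a weighted graph `(G,ω)`, defined
coefficientwise: the coefficient of a monomial `m` is the number of proper set-valued
colorings `κ` with `∏_v (∏_{i∈κ(v)} x_i)^{ω(v)}` equal to `m`. -/
def kromaticW {V : Type*} [Fintype V] (G : SimpleGraph V) (ω : V → ℕ+) :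
    MvPowerSeries ℕ+ ℤ :=
  fun m => (Nat.card {κ : V → Finset ℕ+ // IsProperSV G κ ∧
    ∀ i : ℕ+, m i = ∑ v : V, if i ∈ κ v then (ω v : ℕ) else 0} : ℤ)

/-- Renaming of variables of a multivariate power series along a bijection of the
variable sets. -/
def reindexPS {σ τ R : Type*} [Semiring R] (e : σ ≃ τ) (f : MvPowerSeries σ R) :
    MvPowerSeries τ R :=
  fun d => MvPowerSeries.coeff (Finsupp.equivMapDomain e.symm d) f

/-- `f(x) · g(y)`: the product of `f` in the first alphabet and `g` in the second
alphabet, as a power series in the disjoint union of the two alphabets. -/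
def sumAlphabet {R : Type*} [CommRing R] (f g : MvPowerSeries ℕ+ R) :
    MvPowerSeries (ℕ+ ⊕ ℕ+) R :=
  fun d =>
    MvPowerSeries.coeff (Finsupp.sumFinsuppEquivProdFinsupp d).1 f *
      MvPowerSeries.coeff (Finsupp.sumFinsuppEquivProdFinsupp d).2 g

section Aux

open Finset

/-- The set of colorings counted by a coefficient of `kromaticW`. -/
abbrev colSet {V : Type*} [Fintype V] (G : SimpleGraph V) (ω : V → ℕ+) (m : ℕ+ → ℕ) :
    Type _ :=
  {κ : V → Finset ℕ+ // IsProperSV G κ ∧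
    ∀ i : ℕ+, m i = ∑ v : V, if i ∈ κ v then (ω v : ℕ) else 0}

lemma colSet_congr {V : Type*} [Fintype V] (G : SimpleGraph V) (ω : V → ℕ+)
    {m m' : ℕ+ → ℕ} (h : ∀ i, m i = m' i) : colSet G ω m = colSet G ω m' := by
  rw [funext h]

lemma colSet_finite {V : Type*} [Fintype V] (G : SimpleGraph V) (ω : V → ℕ+)
    (m : ℕ+ → ℕ) (hm : (Function.support m).Finite) : Finite (colSet G ω m) := by
  set K := hm.toFinset with hK
  have hsub : ∀ κ : colSet G ω m, ∀ v, κ.1 v ⊆ K := by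
    rintro ⟨κ, hκ⟩ v i hi
    simp only [hK, Set.Finite.mem_toFinset, Function.mem_support]
    intro h0
    have h2 := hκ.2 i
    rw [h0] at h2
    have h3 : (if i ∈ κ v then (ω v : ℕ) else 0) = 0 := by
      refine (Finset.sum_eq_zero_iff_of_nonneg ?_).1 h2.symm v (Finset.mem_univ v)
      intro x _
      positivity
    rw [if_pos hi] at h3
    simp at h3
  have hinj : Function.Injective
      (fun (κ : colSet G ω m) (v : V) => (⟨κ.1 v, Finset.mem_powerset.2 (hsub κ v)⟩ :
        {s : Finset ℕ+ // s ∈ K.powerset})) := by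
    intro a b h
    apply Subtype.ext
    funext v
    exact congrArg Subtype.val (congrFun h v)
  exact Finite.of_injective _ hinj

lemma nat_card_sigma {ι : Type*} [Fintype ι] (F : ι → Type*) [∀ i, Finite (F i)] :
    Nat.card (Σ i, F i) = ∑ i, Nat.card (F i) := by
  letI : ∀ i, Fintype (F i) := fun i => Fintype.ofFinite (F i)
  simp only [Nat.card_eq_fintype_card]
  exact Fintype.card_sigma

variable (e : ℕ+ ≃ ℕ+ ⊕ ℕ+)

/-- The colors assigned to the first alphabet. -/
def Lpart (s : Finset ℕ+) : Finset ℕ+ :=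
  s.preimage (fun j => e.symm (Sum.inl j))
    (Function.Injective.injOn fun a b h => Sum.inl.inj (e.symm.injective h))

/-- The colors assigned to the second alphabet. -/
def Rpart (s : Finset ℕ+) : Finset ℕ+ :=
  s.preimage (fun j => e.symm (Sum.inr j))
    (Function.Injective.injOn fun a b h => Sum.inr.inj (e.symm.injective h))

lemma mem_Lpart {s : Finset ℕ+} {j : ℕ+} : j ∈ Lpart e s ↔ e.symm (Sum.inl j) ∈ s :=
  Finset.mem_preimage

lemma mem_Rpart {s : Finset ℕ+} {j : ℕ+} : j ∈ Rpart e s ↔ e.symm (Sum.inr j) ∈ s :=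
  Finset.mem_preimage

variable {V : Type*} [Fintype V] [DecidableEq V]

/-- The pair (set of vertices using the first alphabet, set using the second). -/
def Smap (κ : V → Finset ℕ+) : Finset V × Finset V :=
  (Finset.univ.filter fun v => (Lpart e (κ v)).Nonempty,
   Finset.univ.filter fun v => (Rpart e (κ v)).Nonempty)

lemma Smap_union (κ : V → Finset ℕ+) (hκ : ∀ v, (κ v).Nonempty) :
    (Smap e κ).1 ∪ (Smap e κ).2 = Finset.univ := by
  ext v
  simp only [Smap, Finset.mem_union, Finset.mem_filter, Finset.mem_univ, true_and,
    iff_true]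
  obtain ⟨i, hi⟩ := hκ v
  rcases h : e i with j | j
  · exact Or.inl ⟨j, mem_Lpart e |>.2 (by rw [← h, Equiv.symm_apply_apply]; exact hi)⟩
  · exact Or.inr ⟨j, mem_Rpart e |>.2 (by rw [← h, Equiv.symm_apply_apply]; exact hi)⟩

variable (p : Finset V × Finset V)

/-- Combine two colorings on the two alphabets to one coloring. -/
def glue (c₁ : (↑p.1 : Set V) → Finset ℕ+) (c₂ : (↑p.2 : Set V) → Finset ℕ+) :
    V → Finset ℕ+ := fun v =>
  ((if h : v ∈ p.1 then c₁ ⟨v, h⟩ else ∅).image fun j => e.symm (Sum.inl j)) ∪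
    ((if h : v ∈ p.2 then c₂ ⟨v, h⟩ else ∅).image fun j => e.symm (Sum.inr j))

lemma mem_glue_inl (c₁ : (↑p.1 : Set V) → Finset ℕ+) (c₂ : (↑p.2 : Set V) → Finset ℕ+)
    (v : V) (j : ℕ+) :
    e.symm (Sum.inl j) ∈ glue e p c₁ c₂ v ↔ ∃ h : v ∈ p.1, j ∈ c₁ ⟨v, h⟩ := by
  unfold glue
  simp only [Finset.mem_union, Finset.mem_image]
  constructor
  · rintro (⟨j', hj', hee⟩ | ⟨j', hj', hee⟩)
    · have hjj : j' = j := Sum.inl.inj (e.symm.injective hee)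
      subst hjj
      by_cases h : v ∈ p.1
      · rw [dif_pos h] at hj'
        exact ⟨h, hj'⟩
      · rw [dif_neg h] at hj'
        exact absurd hj' (Finset.notMem_empty _)
    · exact absurd (e.symm.injective hee) (by simp)
  · rintro ⟨h, hj⟩
    exact Or.inl ⟨j, by rw [dif_pos h]; exact hj, rfl⟩

lemma mem_glue_inr (c₁ : (↑p.1 : Set V) → Finset ℕ+) (c₂ : (↑p.2 : Set V) → Finset ℕ+)
    (v : V) (j : ℕ+) :
    e.symm (Sum.inr j) ∈ glue e p c₁ c₂ v ↔ ∃ h : v ∈ p.2, j ∈ c₂ ⟨v, h⟩ := by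
  unfold glue
  simp only [Finset.mem_union, Finset.mem_image]
  constructor
  · rintro (⟨j', hj', hee⟩ | ⟨j', hj', hee⟩)
    · exact absurd (e.symm.injective hee) (by simp)
    · have hjj : j' = j := Sum.inr.inj (e.symm.injective hee)
      subst hjj
      by_cases h : v ∈ p.2
      · rw [dif_pos h] at hj'
        exact ⟨h, hj'⟩
      · rw [dif_neg h] at hj'
        exact absurd hj' (Finset.notMem_empty _)
  · rintro ⟨h, hj⟩
    exact Or.inr ⟨j, by rw [dif_pos h]; exact hj, rfl⟩

end Aux

section Main

variable (e : ℕ+ ≃ ℕ+ ⊕ ℕ+) {V : Type*} [Fintype V] [DecidableEq V]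
variable (G : SimpleGraph V) (ω : V → ℕ+) (d : (ℕ+ ⊕ ℕ+) →₀ ℕ)

lemma forward_left (κ : V → Finset ℕ+)
    (hκ : IsProperSV G κ ∧ ∀ i : ℕ+, d (e i) = ∑ v : V, if i ∈ κ v then (ω v : ℕ) else 0)
    (p : Finset V × Finset V) (hS : Smap e κ = p) :
    IsProperSV (G.induce (↑p.1 : Set V)) (fun v => Lpart e (κ v.1)) ∧
      ∀ j : ℕ+, d (Sum.inl j) =
        ∑ v : (↑p.1 : Set V), if j ∈ Lpart e (κ v.1) then (ω v.1 : ℕ) else 0 := by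
  subst hS
  refine ⟨⟨?_, ?_⟩, ?_⟩
  · intro v
    have hv := v.2
    simp only [Smap, Finset.coe_filter, Set.mem_setOf_eq] at hv
    exact hv.2
  · intro u v huv
    have hadj : G.Adj u.1 v.1 := huv
    have hd := hκ.1.2 hadj
    rw [Finset.disjoint_left] at hd ⊢
    intro j hj hj'
    exact hd (mem_Lpart e |>.1 hj) (mem_Lpart e |>.1 hj')
  · intro j
    have h0 := hκ.2 (e.symm (Sum.inl j))
    rw [Equiv.apply_symm_apply] at h0
    rw [h0]
    have h1 : ∀ v : V, (if e.symm (Sum.inl j) ∈ κ v then (ω v : ℕ) else 0) =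
        (if j ∈ Lpart e (κ v) then (ω v : ℕ) else 0) := by
      intro v
      simp only [mem_Lpart e]
    calc ∑ v : V, (if e.symm (Sum.inl j) ∈ κ v then (ω v : ℕ) else 0)
        = ∑ v : V, (if j ∈ Lpart e (κ v) then (ω v : ℕ) else 0) :=
          Finset.sum_congr rfl (fun v _ => h1 v)
      _ = ∑ v ∈ (Smap e κ).1, (if j ∈ Lpart e (κ v) then (ω v : ℕ) else 0) := by
          refine (Finset.sum_subset (Finset.subset_univ _) ?_).symm
          intro v _ hv
          rw [if_neg]
          intro hj
          refine hv ?_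
          simp only [Smap, Finset.mem_filter, Finset.mem_univ, true_and]
          exact ⟨j, hj⟩
      _ = ∑ v : ((↑(Smap e κ).1 : Set V)), (if j ∈ Lpart e (κ v.1) then (ω v.1 : ℕ) else 0) :=
          (Finset.sum_finset_coe _ _).symm

lemma forward_right (κ : V → Finset ℕ+)
    (hκ : IsProperSV G κ ∧ ∀ i : ℕ+, d (e i) = ∑ v : V, if i ∈ κ v then (ω v : ℕ) else 0)
    (p : Finset V × Finset V) (hS : Smap e κ = p) :
    IsProperSV (G.induce (↑p.2 : Set V)) (fun v => Rpart e (κ v.1)) ∧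
      ∀ j : ℕ+, d (Sum.inr j) =
        ∑ v : (↑p.2 : Set V), if j ∈ Rpart e (κ v.1) then (ω v.1 : ℕ) else 0 := by
  subst hS
  refine ⟨⟨?_, ?_⟩, ?_⟩
  · intro v
    have hv := v.2
    simp only [Smap, Finset.coe_filter, Set.mem_setOf_eq] at hv
    exact hv.2
  · intro u v huv
    have hadj : G.Adj u.1 v.1 := huv
    have hd := hκ.1.2 hadj
    rw [Finset.disjoint_left] at hd ⊢
    intro j hj hj'
    exact hd (mem_Rpart e |>.1 hj) (mem_Rpart e |>.1 hj')
  · intro j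
    have h0 := hκ.2 (e.symm (Sum.inr j))
    rw [Equiv.apply_symm_apply] at h0
    rw [h0]
    have h1 : ∀ v : V, (if e.symm (Sum.inr j) ∈ κ v then (ω v : ℕ) else 0) =
        (if j ∈ Rpart e (κ v) then (ω v : ℕ) else 0) := by
      intro v
      simp only [mem_Rpart e]
    calc ∑ v : V, (if e.symm (Sum.inr j) ∈ κ v then (ω v : ℕ) else 0)
        = ∑ v : V, (if j ∈ Rpart e (κ v) then (ω v : ℕ) else 0) :=
          Finset.sum_congr rfl (fun v _ => h1 v)
      _ = ∑ v ∈ (Smap e κ).2, (if j ∈ Rpart e (κ v) then (ω v : ℕ) else 0) := by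
          refine (Finset.sum_subset (Finset.subset_univ _) ?_).symm
          intro v _ hv
          rw [if_neg]
          intro hj
          refine hv ?_
          simp only [Smap, Finset.mem_filter, Finset.mem_univ, true_and]
          exact ⟨j, hj⟩
      _ = ∑ v : ((↑(Smap e κ).2 : Set V)), (if j ∈ Rpart e (κ v.1) then (ω v.1 : ℕ) else 0) :=
          (Finset.sum_finset_coe _ _).symm

lemma backward (p : Finset V × Finset V) (hp : p.1 ∪ p.2 = Finset.univ)
    (c₁ : colSet (G.induce (↑p.1 : Set V)) (fun v => ω v.1) (fun j => d (Sum.inl j)))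
    (c₂ : colSet (G.induce (↑p.2 : Set V)) (fun v => ω v.1) (fun j => d (Sum.inr j))) :
    (IsProperSV G (glue e p c₁.1 c₂.1) ∧
      ∀ i : ℕ+, d (e i) = ∑ v : V, if i ∈ glue e p c₁.1 c₂.1 v then (ω v : ℕ) else 0) ∧
      Smap e (glue e p c₁.1 c₂.1) = p := by
  have hglue1 : ∀ v (h : v ∈ p.1), ∀ j, (e.symm (Sum.inl j) ∈ glue e p c₁.1 c₂.1 v ↔
      j ∈ c₁.1 ⟨v, h⟩) := by
    intro v h j
    rw [mem_glue_inl]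
    constructor
    · rintro ⟨h', hj⟩
      exact hj
    · intro hj
      exact ⟨h, hj⟩
  have hglue2 : ∀ v (h : v ∈ p.2), ∀ j, (e.symm (Sum.inr j) ∈ glue e p c₁.1 c₂.1 v ↔
      j ∈ c₂.1 ⟨v, h⟩) := by
    intro v h j
    rw [mem_glue_inr]
    constructor
    · rintro ⟨h', hj⟩
      exact hj
    · intro hj
      exact ⟨h, hj⟩
  refine ⟨⟨⟨?_, ?_⟩, ?_⟩, ?_⟩
  · -- nonempty
    intro v
    have hv : v ∈ p.1 ∪ p.2 := by rw [hp]; exact Finset.mem_univ v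
    rcases Finset.mem_union.1 hv with h | h
    · obtain ⟨j, hj⟩ := c₁.2.1.1 ⟨v, h⟩
      exact ⟨e.symm (Sum.inl j), (hglue1 v h j).2 hj⟩
    · obtain ⟨j, hj⟩ := c₂.2.1.1 ⟨v, h⟩
      exact ⟨e.symm (Sum.inr j), (hglue2 v h j).2 hj⟩
  · -- proper
    intro u v huv
    rw [Finset.disjoint_left]
    intro i hiu hiv
    have hi : i = e.symm (e i) := (Equiv.symm_apply_apply e i).symm
    rcases hei : e i with j | j
    · rw [hi, hei, mem_glue_inl] at hiu hiv
      obtain ⟨hu, hju⟩ := hiu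
      obtain ⟨hv, hjv⟩ := hiv
      have hadj : (G.induce (↑p.1 : Set V)).Adj ⟨u, hu⟩ ⟨v, hv⟩ := huv
      exact Finset.disjoint_left.1 (c₁.2.1.2 hadj) hju hjv
    · rw [hi, hei, mem_glue_inr] at hiu hiv
      obtain ⟨hu, hju⟩ := hiu
      obtain ⟨hv, hjv⟩ := hiv
      have hadj : (G.induce (↑p.2 : Set V)).Adj ⟨u, hu⟩ ⟨v, hv⟩ := huv
      exact Finset.disjoint_left.1 (c₂.2.1.2 hadj) hju hjv
  · -- degree
    intro i
    have hi : i = e.symm (e i) := (Equiv.symm_apply_apply e i).symm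
    rcases hei : e i with j | j
    · have hc := c₁.2.2 j
      beta_reduce at hc
      rw [hc]
      calc ∑ v : (↑p.1 : Set V), (if j ∈ c₁.1 v then ((ω v.1 : ℕ)) else 0)
          = ∑ v : (↑p.1 : Set V),
              (if i ∈ glue e p c₁.1 c₂.1 v.1 then ((ω v.1 : ℕ)) else 0) := by
            refine Finset.sum_congr rfl (fun v _ => ?_)
            refine if_congr ?_ rfl rfl
            rw [hi, hei]
            constructor
            · intro hj
              exact (hglue1 v.1 v.2 j).2 (by rwa [Subtype.coe_eta])
            · intro hg
              have := (hglue1 v.1 v.2 j).1 hg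
              rwa [Subtype.coe_eta] at this
        _ = ∑ v ∈ p.1, (if i ∈ glue e p c₁.1 c₂.1 v then ((ω v : ℕ)) else 0) :=
            Finset.sum_finset_coe (fun v => if i ∈ glue e p c₁.1 c₂.1 v then ((ω v : ℕ)) else 0) p.1
        _ = ∑ v : V, (if i ∈ glue e p c₁.1 c₂.1 v then ((ω v : ℕ)) else 0) := by
            refine Finset.sum_subset (Finset.subset_univ _) ?_
            intro v _ hv
            rw [if_neg]
            intro hg
            rw [hi, hei, mem_glue_inl] at hg
            exact hv hg.1
    · have hc := c₂.2.2 j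
      beta_reduce at hc
      rw [hc]
      calc ∑ v : (↑p.2 : Set V), (if j ∈ c₂.1 v then ((ω v.1 : ℕ)) else 0)
          = ∑ v : (↑p.2 : Set V),
              (if i ∈ glue e p c₁.1 c₂.1 v.1 then ((ω v.1 : ℕ)) else 0) := by
            refine Finset.sum_congr rfl (fun v _ => ?_)
            refine if_congr ?_ rfl rfl
            rw [hi, hei]
            constructor
            · intro hj
              exact (hglue2 v.1 v.2 j).2 (by rwa [Subtype.coe_eta])
            · intro hg
              have := (hglue2 v.1 v.2 j).1 hg
              rwa [Subtype.coe_eta] at this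
        _ = ∑ v ∈ p.2, (if i ∈ glue e p c₁.1 c₂.1 v then ((ω v : ℕ)) else 0) :=
            Finset.sum_finset_coe (fun v => if i ∈ glue e p c₁.1 c₂.1 v then ((ω v : ℕ)) else 0) p.2
        _ = ∑ v : V, (if i ∈ glue e p c₁.1 c₂.1 v then ((ω v : ℕ)) else 0) := by
            refine Finset.sum_subset (Finset.subset_univ _) ?_
            intro v _ hv
            rw [if_neg]
            intro hg
            rw [hi, hei, mem_glue_inr] at hg
            exact hv hg.1
  · -- Smap = p
    refine Prod.ext ?_ ?_
    · ext v
      simp only [Smap, Finset.mem_filter, Finset.mem_univ, true_and]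
      constructor
      · rintro ⟨j, hj⟩
        rw [mem_Lpart, mem_glue_inl] at hj
        exact hj.1
      · intro h
        obtain ⟨j, hj⟩ := c₁.2.1.1 ⟨v, h⟩
        exact ⟨j, (mem_Lpart e).2 ((hglue1 v h j).2 hj)⟩
    · ext v
      simp only [Smap, Finset.mem_filter, Finset.mem_univ, true_and]
      constructor
      · rintro ⟨j, hj⟩
        rw [mem_Rpart, mem_glue_inr] at hj
        exact hj.1
      · intro h
        obtain ⟨j, hj⟩ := c₂.2.1.1 ⟨v, h⟩
        exact ⟨j, (mem_Rpart e).2 ((hglue2 v h j).2 hj)⟩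

end Main

section Key

variable (e : ℕ+ ≃ ℕ+ ⊕ ℕ+) {V : Type*} [Fintype V] [DecidableEq V]
variable (G : SimpleGraph V) (ω : V → ℕ+) (d : (ℕ+ ⊕ ℕ+) →₀ ℕ)

def fiberEquiv (p : Finset V × Finset V) (hp : p.1 ∪ p.2 = Finset.univ) :
    {a : colSet G ω (fun i => d (e i)) // Smap e a.1 = p} ≃
      colSet (G.induce (↑p.1 : Set V)) (fun v => ω v.1) (fun j => d (Sum.inl j)) ×
        colSet (G.induce (↑p.2 : Set V)) (fun v => ω v.1) (fun j => d (Sum.inr j)) where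
  toFun a :=
    (⟨fun v => Lpart e (a.1.1 v.1), forward_left e G ω d a.1.1 a.1.2 p a.2⟩,
     ⟨fun v => Rpart e (a.1.1 v.1), forward_right e G ω d a.1.1 a.1.2 p a.2⟩)
  invFun c :=
    ⟨⟨glue e p c.1.1 c.2.1, (backward e G ω d p hp c.1 c.2).1⟩,
      (backward e G ω d p hp c.1 c.2).2⟩
  left_inv a := by
    apply Subtype.ext
    apply Subtype.ext
    funext v
    ext i
    have hi : i = e.symm (e i) := (Equiv.symm_apply_apply e i).symm
    rcases hei : e i with j | j
    · rw [hi, hei]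
      simp only [mem_glue_inl]
      constructor
      · rintro ⟨h, hj⟩
        exact mem_Lpart e |>.1 hj
      · intro hm
        refine ⟨?_, (mem_Lpart e).2 hm⟩
        rw [← a.2]
        simp only [Smap, Finset.mem_filter, Finset.mem_univ, true_and]
        exact ⟨j, (mem_Lpart e).2 hm⟩
    · rw [hi, hei]
      simp only [mem_glue_inr]
      constructor
      · rintro ⟨h, hj⟩
        exact mem_Rpart e |>.1 hj
      · intro hm
        refine ⟨?_, (mem_Rpart e).2 hm⟩
        rw [← a.2]
        simp only [Smap, Finset.mem_filter, Finset.mem_univ, true_and]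
        exact ⟨j, (mem_Rpart e).2 hm⟩
  right_inv c := by
    refine Prod.ext (Subtype.ext ?_) (Subtype.ext ?_)
    · funext v
      ext j
      simp only [mem_Lpart, mem_glue_inl]
      constructor
      · rintro ⟨h, hj⟩
        rwa [Subtype.coe_eta] at hj
      · intro hj
        exact ⟨v.2, by rwa [Subtype.coe_eta]⟩
    · funext v
      ext j
      simp only [mem_Rpart, mem_glue_inr]
      constructor
      · rintro ⟨h, hj⟩
        rwa [Subtype.coe_eta] at hj
      · intro hj
        exact ⟨v.2, by rwa [Subtype.coe_eta]⟩

lemma key_count :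
    Nat.card (colSet G ω (fun i => d (e i))) =
      ∑ p ∈ Finset.univ.filter (fun p : Finset V × Finset V => p.1 ∪ p.2 = Finset.univ),
        Nat.card (colSet (G.induce (↑p.1 : Set V)) (fun v => ω v.1)
            (fun j => d (Sum.inl j))) *
          Nat.card (colSet (G.induce (↑p.2 : Set V)) (fun v => ω v.1)
            (fun j => d (Sum.inr j))) := by
  have h1 : (Function.support fun i : ℕ+ => d (e i)).Finite := by
    apply Set.Finite.subset (Set.Finite.preimage (e.injective.injOn) d.support.finite_toSet)
    intro i hi
    simp only [Function.mem_support] at hi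
    simp only [Set.mem_preimage, Finset.mem_coe, Finsupp.mem_support_iff]
    exact hi
  haveI hA : Finite (colSet G ω fun i => d (e i)) := colSet_finite _ _ _ h1
  let f : colSet G ω (fun i => d (e i)) → Finset V × Finset V := fun a => Smap e a.1
  have hcard : Nat.card (colSet G ω fun i => d (e i)) =
      ∑ q : Finset V × Finset V, Nat.card {a // f a = q} := by
    rw [← Nat.card_congr (Equiv.sigmaFiberEquiv f), nat_card_sigma]
  rw [hcard]
  have hterm : ∀ q : Finset V × Finset V, q.1 ∪ q.2 = Finset.univ →
      Nat.card {a // f a = q} =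
        Nat.card (colSet (G.induce (↑q.1 : Set V)) (fun v => ω v.1)
            (fun j => d (Sum.inl j))) *
          Nat.card (colSet (G.induce (↑q.2 : Set V)) (fun v => ω v.1)
            (fun j => d (Sum.inr j))) := by
    intro q hq
    rw [← Nat.card_prod]
    exact Nat.card_congr (fiberEquiv e G ω d q hq)
  rw [← Finset.sum_filter_of_ne (p := fun p : Finset V × Finset V =>
      p.1 ∪ p.2 = Finset.univ) (fun q _ hq => ?_)]
  · exact Finset.sum_congr rfl fun q hqf =>
      hterm q (by simpa using (Finset.mem_filter.1 hqf).2)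
  · by_contra hne
    have : Nonempty {a // f a = q} := by
      rcases Nat.card_ne_zero.1 hq with ⟨h, _⟩
      exact h
    obtain ⟨a, ha⟩ := this
    exact hne (ha ▸ Smap_union e a.1 a.2.1.1)

end Key


/-- The coproduct formula for the weighted kromatic symmetric
function. -/
theorem kromaticW_sum_alphabets {V : Type*} [Fintype V] [DecidableEq V]
    (G : SimpleGraph V) (ω : V → ℕ+) (e : ℕ+ ≃ ℕ+ ⊕ ℕ+) :
    reindexPS e (kromaticW G ω) =
      ∑ p ∈ Finset.univ.filter
          (fun p : Finset V × Finset V => p.1 ∪ p.2 = Finset.univ),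
        sumAlphabet
          (kromaticW (G.induce (↑p.1 : Set V)) (fun v => ω v.1))
          (kromaticW (G.induce (↑p.2 : Set V)) (fun v => ω v.1)) := by
  
  funext d
  have hL : reindexPS e (kromaticW G ω) d =
      ((Nat.card (colSet G ω fun i => d (e i)) : ℤ)) := by
    have hm : ⇑(Finsupp.equivMapDomain e.symm d) = fun i => d (e i) := by
      funext i
      rw [Finsupp.equivMapDomain_apply, Equiv.symm_symm]
    show (Nat.card (colSet G ω ⇑(Finsupp.equivMapDomain e.symm d)) : ℤ) = _
    rw [hm]
  have hsum : (∑ p ∈ Finset.univ.filter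
        (fun p : Finset V × Finset V => p.1 ∪ p.2 = Finset.univ),
      sumAlphabet (kromaticW (G.induce (↑p.1 : Set V)) fun v => ω v.1)
        (kromaticW (G.induce (↑p.2 : Set V)) fun v => ω v.1)) d
      = ∑ p ∈ Finset.univ.filter
          (fun p : Finset V × Finset V => p.1 ∪ p.2 = Finset.univ),
        (Nat.card (colSet (G.induce (↑p.1 : Set V)) (fun v => ω v.1)
            (fun j => d (Sum.inl j))) : ℤ) *
          (Nat.card (colSet (G.induce (↑p.2 : Set V)) (fun v => ω v.1)
            (fun j => d (Sum.inr j))) : ℤ) := by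
    rw [show (∑ p ∈ Finset.univ.filter
        (fun p : Finset V × Finset V => p.1 ∪ p.2 = Finset.univ),
      sumAlphabet (kromaticW (G.induce (↑p.1 : Set V)) fun v => ω v.1)
        (kromaticW (G.induce (↑p.2 : Set V)) fun v => ω v.1)) d
      = MvPowerSeries.coeff d (∑ p ∈ Finset.univ.filter
        (fun p : Finset V × Finset V => p.1 ∪ p.2 = Finset.univ),
      sumAlphabet (kromaticW (G.induce (↑p.1 : Set V)) fun v => ω v.1)
        (kromaticW (G.induce (↑p.2 : Set V)) fun v => ω v.1)) from rfl, map_sum]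
    refine Finset.sum_congr rfl fun p _ => ?_
    show (Nat.card (colSet (G.induce (↑p.1 : Set V)) (fun v => ω v.1)
          ⇑((Finsupp.sumFinsuppEquivProdFinsupp d).1)) : ℤ) *
        (Nat.card (colSet (G.induce (↑p.2 : Set V)) (fun v => ω v.1)
          ⇑((Finsupp.sumFinsuppEquivProdFinsupp d).2)) : ℤ) = _
    rw [colSet_congr (G.induce (↑p.1 : Set V)) (fun v => ω v.1)
        (fun j => Finsupp.fst_sumFinsuppEquivProdFinsupp d j),
      colSet_congr (G.induce (↑p.2 : Set V)) (fun v => ω v.1)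
        (fun j => Finsupp.snd_sumFinsuppEquivProdFinsupp d j)]
  rw [hL, hsum]
  exact_mod_cast key_count e G ω d
end
end

section
/- For every positive integer n, ē_n(x,y) = Σ_{i,j ≥ 0, i+j = n} ē_i(x)·ē_j(y) + Σ_{i,j ≥ 1, i+j = n+1} ē_i(x)·ē_j(y), where ē_0 := 1. -/
/-!
STATEMENT 7: For every positive integer `n`,
`ē_n(x,y) = Σ_{i+j=n, i,j≥0} ē_i(x) ē_j(y) + Σ_{i+j=n+1, i,j≥1} ē_i(x) ē_j(y)`,
where `ē_0 := 1`.
-/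

open scoped Classical
noncomputable section

lemma ebar_apply_sf (i : ℕ) (m : ℕ+ →₀ ℕ) (hm : ∀ x, m x ≤ 1) :
    ebar i m = (if i = 0 then (if m.support.card = 0 then 1 else 0)
      else if i ≤ m.support.card then ((m.support.card - 1).choose (i - 1) : ℤ) else 0) := by
  cases i with
  | zero =>
    show (1 : MvPowerSeries ℕ+ ℤ) m = _
    rw [show (1 : MvPowerSeries ℕ+ ℤ) m = if m = 0 then 1 else 0 from MvPowerSeries.coeff_one m]
    simp [Finset.card_eq_zero, Finsupp.support_eq_empty]
  | succ r =>
    show (if (∀ i, m i ≤ 1) ∧ r + 1 ≤ m.support.card then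
        (Nat.choose (m.support.card - 1) r : ℤ) else 0) = _
    simp [hm]

lemma ebar_apply_nsf (i : ℕ) (m : ℕ+ →₀ ℕ) (x : ℕ+) (hx : ¬ m x ≤ 1) :
    ebar i m = 0 := by
  cases i with
  | zero =>
    show (1 : MvPowerSeries ℕ+ ℤ) m = _
    rw [show (1 : MvPowerSeries ℕ+ ℤ) m = if m = 0 then 1 else 0 from MvPowerSeries.coeff_one m]
    have : m ≠ 0 := by
      intro h; exact hx (by simp [h])
    simp [this]
  | succ r =>
    show (if (∀ i, m i ≤ 1) ∧ r + 1 ≤ m.support.card then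
        (Nat.choose (m.support.card - 1) r : ℤ) else 0) = _
    rw [if_neg]
    rintro ⟨h1, -⟩
    exact hx (h1 x)

-- support card splitting
lemma card_support_sum (d : (ℕ+ ⊕ ℕ+) →₀ ℕ) :
    d.support.card = (Finsupp.sumFinsuppEquivProdFinsupp d).1.support.card
      + (Finsupp.sumFinsuppEquivProdFinsupp d).2.support.card := by
  set a := (Finsupp.sumFinsuppEquivProdFinsupp d).1
  set b := (Finsupp.sumFinsuppEquivProdFinsupp d).2
  have ha : ∀ x, a x = d (Sum.inl x) := fun x => Finsupp.fst_sumFinsuppEquivProdFinsupp d x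
  have hb : ∀ y, b y = d (Sum.inr y) := fun y => Finsupp.snd_sumFinsuppEquivProdFinsupp d y
  have hsupp : d.support =
      (a.support.map ⟨Sum.inl, Sum.inl_injective⟩) ∪ (b.support.map ⟨Sum.inr, Sum.inr_injective⟩) := by
    ext z
    cases z with
    | inl u => simp [Finsupp.mem_support_iff, ha]
    | inr v => simp [Finsupp.mem_support_iff, hb]
  rw [hsupp, Finset.card_union_of_disjoint, Finset.card_map, Finset.card_map]
  rw [Finset.disjoint_left]
  rintro z hz hz'
  simp only [Finset.mem_map, Function.Embedding.coeFn_mk] at hz hz'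
  obtain ⟨u, -, rfl⟩ := hz
  obtain ⟨v, -, h⟩ := hz'
  exact Sum.inl_ne_inr h.symm



def Fc : ℕ → ℕ → ℤ
  | 0, p => if p = 0 then 1 else 0
  | i + 1, p => if i + 1 ≤ p then ((p - 1).choose i : ℤ) else 0


lemma Fc_zero (p : ℕ) : Fc 0 p = if p = 0 then 1 else 0 := rfl

lemma Fc_pos (i p : ℕ) (hi : 0 < i) :
    Fc i p = if i ≤ p then ((p - 1).choose (i - 1) : ℤ) else 0 := by
  obtain ⟨j, rfl⟩ := Nat.exists_eq_add_of_lt hi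
  simp [Fc, Nat.add_comm]

lemma Fc_of_pos (i p : ℕ) (hi : 0 < i) (hp : 0 < p) :
    Fc i p = ((p - 1).choose (i - 1) : ℤ) := by
  rw [Fc_pos i p hi]
  split_ifs with h
  · rfl
  · rw [Nat.choose_eq_zero_of_lt]
    · simp
    · omega

lemma vand (a b k : ℕ) :
    ∑ i ∈ Finset.range (k + 1), (a.choose i : ℤ) * (b.choose (k - i)) = ((a + b).choose k : ℤ) := by
  rw [Nat.add_choose_eq, Finset.Nat.sum_antidiagonal_eq_sum_range_succ_mk]
  push_cast
  rfl

lemma key (n p q : ℕ) (hn : 0 < n) :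
    Fc n (p + q) =
      (∑ i ∈ Finset.range (n + 1), Fc i p * Fc (n - i) q) +
        ∑ i ∈ Finset.Icc 1 n, Fc i p * Fc (n + 1 - i) q := by
  rcases Nat.eq_zero_or_pos p with hp | hp
  · subst hp
    have h1 : ∑ i ∈ Finset.range (n + 1), Fc i 0 * Fc (n - i) q = Fc n q := by
      rw [Finset.sum_eq_single 0]
      · simp [Fc]
      · intro i _ hi
        have : 0 < i := Nat.pos_of_ne_zero hi
        rw [Fc_pos i 0 this]
        simp [Nat.not_succ_le_zero, this]
        omega
      · simp
    have h2 : ∑ i ∈ Finset.Icc 1 n, Fc i 0 * Fc (n + 1 - i) q = 0 := by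
      apply Finset.sum_eq_zero
      intro i hi
      simp only [Finset.mem_Icc] at hi
      rw [Fc_pos i 0 (by omega)]
      simp
      omega
    rw [h1, h2, Nat.zero_add, add_zero]
  rcases Nat.eq_zero_or_pos q with hq | hq
  · subst hq
    have h1 : ∑ i ∈ Finset.range (n + 1), Fc i p * Fc (n - i) 0 = Fc n p := by
      rw [Finset.sum_eq_single n]
      · simp [Fc]
      · intro i hi hin
        simp only [Finset.mem_range] at hi
        have : 0 < n - i := by omega
        rw [Fc_pos (n - i) 0 this, mul_ite, mul_zero]
        split_ifs with h
        · omega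
        · rfl
      · simp
    have h2 : ∑ i ∈ Finset.Icc 1 n, Fc i p * Fc (n + 1 - i) 0 = 0 := by
      apply Finset.sum_eq_zero
      intro i hi
      simp only [Finset.mem_Icc] at hi
      rw [Fc_pos (n + 1 - i) 0 (by omega), mul_ite, mul_zero]
      split_ifs with h
      · omega
      · rfl
    rw [h1, h2, Nat.add_zero, add_zero]
  -- main case p, q ≥ 1
  have hFn : Fc n (p + q) = (((p + q) - 1).choose (n - 1) : ℤ) :=
    Fc_of_pos n (p + q) hn (by omega)
  have h2 : ∑ i ∈ Finset.Icc 1 n, Fc i p * Fc (n + 1 - i) q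
      = (((p - 1) + (q - 1)).choose (n - 1) : ℤ) := by
    rw [← vand (p - 1) (q - 1) (n - 1)]
    rw [show Finset.Icc 1 n = Finset.Ico 1 (n + 1) by rfl, Finset.sum_Ico_eq_sum_range]
    have hr : n + 1 - 1 = (n - 1) + 1 := by omega
    rw [hr]
    apply Finset.sum_congr rfl
    intro i hi
    simp only [Finset.mem_range] at hi
    rw [Fc_of_pos (1 + i) p (by omega) hp, Fc_of_pos (n + 1 - (1 + i)) q (by omega) hq,
      show 1 + i - 1 = i from by omega, show n + 1 - (1 + i) - 1 = n - 1 - i from by omega]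
  rcases Nat.lt_or_ge n 2 with hn2 | hn2
  · -- n = 1
    have hn1 : n = 1 := by omega
    subst hn1
    have h1 : ∑ i ∈ Finset.range 2, Fc i p * Fc (1 - i) q = 0 := by
      apply Finset.sum_eq_zero
      intro i hi
      simp only [Finset.mem_range] at hi
      interval_cases i
      · simp [Fc_zero, hp.ne']
      · simp [Fc_zero, hq.ne']
    rw [h1, h2, hFn, zero_add]
    norm_num
  · -- n ≥ 2
    have h1 : ∑ i ∈ Finset.range (n + 1), Fc i p * Fc (n - i) q
        = (((p - 1) + (q - 1)).choose (n - 2) : ℤ) := by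
      rw [← vand (p - 1) (q - 1) (n - 2)]
      rw [show Finset.range (n+1) = Finset.Ico 0 1 ∪ Finset.Ico 1 n ∪ Finset.Ico n (n+1) by
        rw [Finset.Ico_union_Ico_eq_Ico (by omega) (by omega), Finset.Ico_union_Ico_eq_Ico (by omega) (by omega), Finset.range_eq_Ico]]
      rw [Finset.sum_union (Finset.disjoint_left.mpr (by intro a ha hb; simp only [Finset.mem_Ico, Finset.mem_union] at ha hb; omega)),
        Finset.sum_union (Finset.disjoint_left.mpr (by intro a ha hb; simp only [Finset.mem_Ico, Finset.mem_union] at ha hb; omega))]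
      · have e0 : ∑ i ∈ Finset.Ico 0 1, Fc i p * Fc (n - i) q = 0 := by
          simp [Fc_zero, hp.ne']
        have en : ∑ i ∈ Finset.Ico n (n+1), Fc i p * Fc (n - i) q = 0 := by
          simp [Fc_zero, hq.ne']
        rw [e0, en, zero_add, add_zero, Finset.sum_Ico_eq_sum_range]
        have hr : n - 1 = (n - 2) + 1 := by omega
        rw [hr]
        apply Finset.sum_congr rfl
        intro i hi
        simp only [Finset.mem_range] at hi
        rw [Fc_of_pos (1 + i) p (by omega) hp, Fc_of_pos (n - (1 + i)) q (by omega) hq,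
          show 1 + i - 1 = i from by omega, show n - (1 + i) - 1 = n - 2 - i from by omega]
    rw [h1, h2, hFn]
    have hpq : (p + q) - 1 = ((p - 1) + (q - 1)) + 1 := by omega
    have hnn : n - 1 = (n - 2) + 1 := by omega
    rw [hpq, hnn, Nat.choose_succ_succ]
    push_cast
    ring

lemma ebar_apply_sf' (i : ℕ) (m : ℕ+ →₀ ℕ) (hm : ∀ x, m x ≤ 1) :
    ebar i m = Fc i m.support.card := by
  rw [ebar_apply_sf i m hm]
  cases i with
  | zero => rfl
  | succ r => simp [Fc]



/-- The coproduct formula for `ē_n`. -/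
theorem ebar_sum_alphabets (n : ℕ) (hn : 0 < n) (e : ℕ+ ≃ ℕ+ ⊕ ℕ+) :
    reindexPS e (ebar n) =
      (∑ i ∈ Finset.range (n + 1), sumAlphabet (ebar i) (ebar (n - i))) +
        ∑ i ∈ Finset.Icc 1 n, sumAlphabet (ebar i) (ebar (n + 1 - i)) := by
  funext d
  set a := (Finsupp.sumFinsuppEquivProdFinsupp d).1 with haa
  set b := (Finsupp.sumFinsuppEquivProdFinsupp d).2 with hbb
  set m' := Finsupp.equivMapDomain e.symm d with hm'
  have hLHS : reindexPS e (ebar n) d = ebar n m' := rfl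
  have hm'app : ∀ x, m' x = d (e x) := by
    intro x
    rw [hm', Finsupp.equivMapDomain_apply, Equiv.symm_symm]
  have happ : ∀ x, a x = d (Sum.inl x) := fun x => Finsupp.fst_sumFinsuppEquivProdFinsupp d x
  have hbpp : ∀ y, b y = d (Sum.inr y) := fun y => Finsupp.snd_sumFinsuppEquivProdFinsupp d y
  have hRHS : ((∑ i ∈ Finset.range (n + 1), sumAlphabet (ebar i) (ebar (n - i))) +
        ∑ i ∈ Finset.Icc 1 n, sumAlphabet (ebar i) (ebar (n + 1 - i))) d
      = (∑ i ∈ Finset.range (n + 1), ebar i a * ebar (n - i) b) +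
        ∑ i ∈ Finset.Icc 1 n, ebar i a * ebar (n + 1 - i) b := by
    show ((∑ i ∈ Finset.range (n + 1), sumAlphabet (ebar i) (ebar (n - i))) d +
        (∑ i ∈ Finset.Icc 1 n, sumAlphabet (ebar i) (ebar (n + 1 - i))) d) = _
    have hs : ∀ (s : Finset ℕ) (F : ℕ → MvPowerSeries (ℕ+ ⊕ ℕ+) ℤ),
        (∑ i ∈ s, F i) d = ∑ i ∈ s, F i d := fun s F => map_sum (MvPowerSeries.coeff d) F s
    rw [hs, hs]
    rfl
  rw [hLHS, hRHS]
  by_cases hsq : ∀ x, d x ≤ 1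
  · have hma : ∀ x, m' x ≤ 1 := fun x => (hm'app x) ▸ hsq (e x)
    have haq : ∀ x, a x ≤ 1 := fun x => (happ x) ▸ hsq (Sum.inl x)
    have hbq : ∀ y, b y ≤ 1 := fun y => (hbpp y) ▸ hsq (Sum.inr y)
    have hcard : m'.support.card = a.support.card + b.support.card := by
      have : m'.support = d.support.map e.symm.toEmbedding := rfl
      rw [this, Finset.card_map, card_support_sum d]
    rw [ebar_apply_sf' n m' hma, hcard]
    have h1 : ∀ i, ebar i a = Fc i a.support.card := fun i => ebar_apply_sf' i a haq
    have h2 : ∀ i, ebar i b = Fc i b.support.card := fun i => ebar_apply_sf' i b hbq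
    simp only [h1, h2]
    exact key n a.support.card b.support.card hn
  · push_neg at hsq
    obtain ⟨x, hx⟩ := hsq
    have hzero : ebar n m' = 0 := by
      apply ebar_apply_nsf n m' (e.symm x)
      rw [hm'app, Equiv.apply_symm_apply]
      omega
    rw [hzero]
    cases x with
    | inl u =>
      have hza : ∀ i, ebar i a = 0 := fun i =>
        ebar_apply_nsf i a u (by rw [happ]; omega)
      simp [hza]
    | inr v =>
      have hzb : ∀ i, ebar i b = 0 := fun i =>
        ebar_apply_nsf i b v (by rw [hbpp]; omega)
      simp [hzb]
end
end
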